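/- arXiv:1504.03037 — 3 statements merged into one kernel-verified Lean document; each statement's English description precedes it below -/
import Mathlib

section
/- Let A be a CLO, let B ⊆ A be a convex subset regarded as an L_κ-structure with the induced order and unary predicates, let φ(x̄,ȳ) be an L_κ-formula, and let ā be a tuple of elements of A∖B. Then there is an L_κ-formula ψ(x̄) without parameters such that for every tuple b̄ of elements of B, B ⊨ ψ(b̄) if and only if A ⊨ φ(b̄,ā). -/
open FirstOrder Language Set

/-- Relation symbols of the language `L_κ` of colored linear orders:
a binary `<` and a unary color predicate for each `i : ι`. -/
inductive CLORel (ι : Type) : ℕ → Type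
  | lt : CLORel ι 2
  | color (i : ι) : CLORel ι 1

/-- The language `L_κ`, where the colors are indexed by `ι`. -/
def CLOLang (ι : Type) : Language :=
  ⟨fun _ => Empty, CLORel ι⟩

/-- Interpretation of the relation symbols on a linear order `M` with colors `c`. -/
def cloRelMap {ι M : Type} [LinearOrder M] (c : ι → Set M) :
    ∀ {n}, CLORel ι n → (Fin n → M) → Prop
  | _, .lt => fun v => v 0 < v 1
  | _, .color i => fun v => v 0 ∈ c i

/-- The canonical `L_κ`-structure (a colored linear order, CLO) on a linear
order `M` whose colors are given by `c : ι → Set M`. -/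
def CLOStr (ι M : Type) [LinearOrder M] (c : ι → Set M) : (CLOLang ι).Structure M where
  funMap := fun f => Empty.elim f
  RelMap := cloRelMap c

/-- Satisfaction of an `L_κ`-formula in the CLO `(M, <, c)`. -/
def Sat {ι : Type} (M : Type) [LinearOrder M] (c : ι → Set M) {α : Type}
    (φ : (CLOLang ι).Formula α) (v : α → M) : Prop :=
  letI := CLOStr ι M c
  φ.Realize v

/-- The induced colors on a subset of a CLO. -/
def subColor {ι M : Type} (c : ι → Set M) (s : Set M) : ι → Set s :=
  fun i => {x | (x : M) ∈ c i}

/-- Elementary equivalence of CLOs. -/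
def CLOEquiv (ι : Type) (M : Type) [LinearOrder M] (cM : ι → Set M)
    (N : Type) [LinearOrder N] (cN : ι → Set N) : Prop :=
  letI := CLOStr ι M cM
  letI := CLOStr ι N cN
  M ≅[CLOLang ι] N

/-- Isomorphism of CLOs (as `L_κ`-structures). -/
def CLOIso (ι : Type) (M : Type) [LinearOrder M] (cM : ι → Set M)
    (N : Type) [LinearOrder N] (cN : ι → Set N) : Prop :=
  letI := CLOStr ι M cM
  letI := CLOStr ι N cN
  Nonempty (M ≃[CLOLang ι] N)

/-- The complete theory of a CLO. -/
def CLOTheory (ι : Type) (M : Type) [LinearOrder M] (c : ι → Set M) : (CLOLang ι).Theory :=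
  letI := CLOStr ι M c
  (CLOLang ι).completeTheory M

/-- The induced colors on a lexicographic sum `Σₗ i, A i` of CLOs. -/
def sigmaColor {ι I : Type} {A : I → Type} (c : ∀ i, ι → Set (A i)) :
    ι → Set (Σₗ i, A i) :=
  fun k => {x | (ofLex x).2 ∈ c (ofLex x).1 k}

/-- The induced colors on a two-term lexicographic sum `α ⊕ₗ β` of CLOs. -/
def sumColor2 {ι α β : Type} (ca : ι → Set α) (cb : ι → Set β) : ι → Set (α ⊕ₗ β) :=
  fun k => {x | Sum.elim (· ∈ ca k) (· ∈ cb k) (ofLex x)}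

/-- The set defined by a parameter-free formula in one variable in a CLO. -/
def FmlSet (ι : Type) (M : Type) [LinearOrder M] (c : ι → Set M)
    (φ : (CLOLang ι).Formula Unit) : Set M :=
  {x | Sat M c φ fun _ => x}

/-- A CLO is self-additive if it has more than one point and its only
convex parameter-free-definable subsets are `∅` and the whole order. -/
def SelfAdditive (ι : Type) (M : Type) [LinearOrder M] (c : ι → Set M) : Prop :=
  Nontrivial M ∧
    ∀ φ : (CLOLang ι).Formula Unit, (FmlSet ι M c φ).OrdConnected →
      FmlSet ι M c φ = ∅ ∨ FmlSet ι M c φ = Set.univ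

/-- `a ∼ b`: some set definable with parameter `a` is convex, bounded above and
below, and contains both `a` and `b`. -/
def SimRel (ι : Type) {M : Type} [LinearOrder M] (c : ι → Set M) (a b : M) : Prop :=
  ∃ φ : (CLOLang ι).Formula (Unit ⊕ Unit),
    (Set.OrdConnected {x | Sat M c φ (Sum.elim (fun _ => x) fun _ => a)}) ∧
    (∃ u : M, ∀ z ∈ {x | Sat M c φ (Sum.elim (fun _ => x) fun _ => a)}, z < u) ∧
    (∃ l : M, ∀ z ∈ {x | Sat M c φ (Sum.elim (fun _ => x) fun _ => a)}, l < z) ∧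
    a ∈ {x | Sat M c φ (Sum.elim (fun _ => x) fun _ => a)} ∧
    b ∈ {x | Sat M c φ (Sum.elim (fun _ => x) fun _ => a)}

/-- `f : M → N` is an elementary map of CLOs. -/
def IsElemMap (ι : Type) {M N : Type} [LinearOrder M] [LinearOrder N]
    (cM : ι → Set M) (cN : ι → Set N) (f : M → N) : Prop :=
  ∀ (k : ℕ) (φ : (CLOLang ι).Formula (Fin k)) (v : Fin k → M),
    Sat M cM φ v ↔ Sat N cN φ (f ∘ v)

/-- A subset of a CLO, with its induced structure, is an elementary substructure. -/
def IsElemSubset (ι : Type) (B : Type) [LinearOrder B] (cB : ι → Set B) (s : Set B) : Prop :=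
  IsElemMap ι (subColor cB s) cB (Subtype.val : s → B)

/-- A complete `L_κ`-theory is ℵ₀-categorical: any two at-most-countable CLO
models of it are isomorphic.  (Finite and empty models are allowed.) -/
def Aleph0CatTheory (ι : Type) (T : (CLOLang ι).Theory) : Prop :=
  ∀ (N₁ N₂ : Type) (i₁ : LinearOrder N₁) (i₂ : LinearOrder N₂)
    (c₁ : ι → Set N₁) (c₂ : ι → Set N₂),
    Countable N₁ → Countable N₂ →
    (letI := i₁; CLOTheory ι N₁ c₁) = T → (letI := i₂; CLOTheory ι N₂ c₂) = T →
    (letI := i₁; letI := i₂; CLOIso ι N₁ c₁ N₂ c₂)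

/-- `φ` is a convex formula for the complete theory of the CLO `(M₀, c₀)`:
its realizations in every model of that theory form a convex set. -/
def ConvexFml (ι : Type) (M₀ : Type) [LinearOrder M₀] (c₀ : ι → Set M₀)
    (φ : (CLOLang ι).Formula Unit) : Prop :=
  ∀ (B : Type) (iB : LinearOrder B) (cB : ι → Set B),
    (letI := iB; CLOEquiv ι B cB M₀ c₀) → (letI := iB; Set.OrdConnected (FmlSet ι B cB φ))

/-- The set of common realizations of a set of one-variable formulas in a CLO. -/
def TypeSet (ι : Type) (M : Type) [LinearOrder M] (c : ι → Set M)
    (Φ : Set ((CLOLang ι).Formula Unit)) : Set M :=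
  {x | ∀ φ ∈ Φ, Sat M c φ fun _ => x}

/-- A set of one-variable formulas is consistent with the complete theory of
`(M₀, c₀)`: it is realized in some model of that theory. -/
def TypeConsistent (ι : Type) (M₀ : Type) [LinearOrder M₀] (c₀ : ι → Set M₀)
    (Φ : Set ((CLOLang ι).Formula Unit)) : Prop :=
  ∃ (B : Type) (iB : LinearOrder B) (cB : ι → Set B),
    (letI := iB; CLOEquiv ι B cB M₀ c₀) ∧ (letI := iB; ∃ b : B, b ∈ TypeSet ι B cB Φ)

/-- `Φ` is a convex type of the complete theory of `(M₀, c₀)`: a maximal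
consistent set of convex formulas over `∅`.  `IT(T)` is the set of all such. -/
def IsConvexType (ι : Type) (M₀ : Type) [LinearOrder M₀] (c₀ : ι → Set M₀)
    (Φ : Set ((CLOLang ι).Formula Unit)) : Prop :=
  (∀ φ ∈ Φ, ConvexFml ι M₀ c₀ φ) ∧ TypeConsistent ι M₀ c₀ Φ ∧
    ∀ ψ, ConvexFml ι M₀ c₀ ψ → TypeConsistent ι M₀ c₀ (insert ψ Φ) → ψ ∈ Φ

/-- A convex type is isolated if it contains a convex formula contained in no
other convex type. -/
def IsolatedCT (ι : Type) (M₀ : Type) [LinearOrder M₀] (c₀ : ι → Set M₀)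
    (Φ : Set ((CLOLang ι).Formula Unit)) : Prop :=
  ∃ φ ∈ Φ, ConvexFml ι M₀ c₀ φ ∧
    ∀ Ψ, IsConvexType ι M₀ c₀ Ψ → φ ∈ Ψ → Ψ = Φ

/-- A CLO is ℵ₀-saturated: every finitely-satisfiable set of formulas in one
variable over finitely many parameters is realized. -/
def Aleph0Saturated (ι : Type) (S : Type) [LinearOrder S] (cS : ι → Set S) : Prop :=
  ∀ (m : ℕ) (a : Fin m → S) (p : Set ((CLOLang ι).Formula (Unit ⊕ Fin m))),
    (∀ q : Finset ((CLOLang ι).Formula (Unit ⊕ Fin m)), ↑q ⊆ p →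
      ∃ x : S, ∀ φ ∈ q, Sat S cS φ (Sum.elim (fun _ => x) a)) →
    ∃ x : S, ∀ φ ∈ p, Sat S cS φ (Sum.elim (fun _ => x) a)

/-- A CLO is strongly ℵ₀-homogeneous: finite tuples with the same complete type
are conjugate under an automorphism. -/
def StronglyAleph0Homogeneous (ι : Type) (S : Type) [LinearOrder S] (cS : ι → Set S) : Prop :=
  ∀ (m : ℕ) (a b : Fin m → S),
    (∀ φ : (CLOLang ι).Formula (Fin m), Sat S cS φ a ↔ Sat S cS φ b) →
    ∃ g : S ≃ S, (∀ x y : S, x < y ↔ g x < g y) ∧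
      (∀ (k : ι) (x : S), x ∈ cS k ↔ g x ∈ cS k) ∧ ∀ i, g (a i) = b i

/-- Sufficiently saturated: ℵ₀-saturated and strongly ℵ₀-homogeneous. -/
def SuffSaturated (ι : Type) (S : Type) [LinearOrder S] (cS : ι → Set S) : Prop :=
  Aleph0Saturated ι S cS ∧ StronglyAleph0Homogeneous ι S cS

/-- The complete theory of `(M₀, c₀)` is locally simple: for every sufficiently
saturated model `S` and every convex type `Φ`, the theory `T_Φ = Th(Φ(S))` is
ℵ₀-categorical. -/
def LocallySimple (ι : Type) (M₀ : Type) [LinearOrder M₀] (c₀ : ι → Set M₀) : Prop :=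
  ∀ (S : Type) [LinearOrder S], ∀ (cS : ι → Set S),
    CLOEquiv ι S cS M₀ c₀ → SuffSaturated ι S cS →
    ∀ Φ, IsConvexType ι M₀ c₀ Φ →
      Aleph0CatTheory ι
        (CLOTheory ι (TypeSet ι S cS Φ) (subColor cS (TypeSet ι S cS Φ)))

/-- A finite set of pairs is a partial isomorphism of CLOs: it preserves `<`,
equality, and each color, in both directions. -/
def IsPartialIso (ι : Type) {M N : Type} [LinearOrder M] [LinearOrder N]
    (cM : ι → Set M) (cN : ι → Set N) (f : Finset (M × N)) : Prop :=
  ∀ p ∈ f, ∀ q ∈ f,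
    (p.1 < q.1 ↔ p.2 < q.2) ∧ (p.1 = q.1 ↔ p.2 = q.2) ∧
    ∀ k, p.1 ∈ cM k ↔ p.2 ∈ cN k

/-- Back-and-forth equivalence of CLOs: a nonempty family of finite partial
isomorphisms with the back-and-forth extension properties. -/
def BackForthEquiv (ι : Type) (M : Type) [LinearOrder M] (cM : ι → Set M)
    (N : Type) [LinearOrder N] (cN : ι → Set N) : Prop :=
  ∃ F : Set (Finset (M × N)), F.Nonempty ∧ (∀ f ∈ F, IsPartialIso ι cM cN f) ∧
    (∀ f ∈ F, ∀ m : M, ∃ g ∈ F, f ⊆ g ∧ ∃ n : N, (m, n) ∈ g) ∧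
    (∀ f ∈ F, ∀ n : N, ∃ g ∈ F, f ⊆ g ∧ ∃ m : M, (m, n) ∈ g)

/-- The set of complete theories `Th(Φ(A))` as `A` ranges over models of the
complete theory of `(M₀, c₀)` (including the theory of the empty structure,
in case `Φ` is omitted). -/
def TheoriesAt (ι : Type) (M₀ : Type) [LinearOrder M₀] (c₀ : ι → Set M₀)
    (Φ : Set ((CLOLang ι).Formula Unit)) : Set ((CLOLang ι).Theory) :=
  {T | ∃ (A : Type) (iA : LinearOrder A) (cA : ι → Set A),
    (letI := iA; CLOEquiv ι A cA M₀ c₀) ∧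
    T = (letI := iA; CLOTheory ι (TypeSet ι A cA Φ) (subColor cA (TypeSet ι A cA Φ)))}

/-!
Cut `A` into the points below `B`, `B` itself and the points above `B`, and sort every variable
into the piece its value lies in. By induction on formulas (a Feferman–Vaught argument), the set
of sorted assignments satisfying a formula is a finite union of boxes whose sides are definable in
the individual pieces: atomic formulas either live in one piece or are decided by the sorts,
complements of such unions are again such unions, and a quantifier splits into one quantifier per
piece, each acting on a single side. With the parameters `ā` fixed outside `B`, the sides in the
outer pieces become truth values, leaving a finite disjunction of formulas over `B`.
-/

namespace CLO

variable {ι M : Type} [LinearOrder M] (c : ι → Set M)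

section DefinableOn

variable {A : Set M} {γ γ' : Type} {E : Set (γ → M)}

variable (A) in
/-- Only the `A`-valued assignments in `E` are constrained. -/
def DefinableOn (E : Set (γ → M)) : Prop :=
  let _ := CLOStr ι A (subColor c A)
  (∅ : Set A).Definable (CLOLang ι) ((fun u : γ → A => Subtype.val ∘ u) ⁻¹' E)

variable {c}

theorem DefinableOn.compl (h : DefinableOn c A E) : DefinableOn c A Eᶜ := by
  let _ := CLOStr ι A (subColor c A)
  exact Set.Definable.compl h

theorem definableOn_iInter {R : Type} [Finite R] {E : R → Set (γ → M)}
    (h : ∀ r, DefinableOn c A (E r)) : DefinableOn c A (⋂ r, E r) := by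
  let _ := CLOStr ι A (subColor c A)
  unfold DefinableOn
  rw [Set.preimage_iInter]
  exact Set.definable_iInter_of_finite h

theorem definableOn_iUnion {R : Type} [Finite R] {E : R → Set (γ → M)}
    (h : ∀ r, DefinableOn c A (E r)) : DefinableOn c A (⋃ r, E r) := by
  let _ := CLOStr ι A (subColor c A)
  unfold DefinableOn
  rw [Set.preimage_iUnion]
  exact Set.definable_iUnion_of_finite h

theorem DefinableOn.preimage_comp (f : γ → γ') (h : DefinableOn c A E) :
    DefinableOn c A ((fun w : γ' → M => w ∘ f) ⁻¹' E) := by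
  let _ := CLOStr ι A (subColor c A)
  exact Set.Definable.preimage_comp f h

theorem definableOn_const (p : Prop) : DefinableOn c A {_w : γ → M | p} := by
  let _ := CLOStr ι A (subColor c A)
  by_cases hp : p <;> simp [DefinableOn, hp]

theorem DefinableOn.exists_mem {E : Set (γ ⊕ Unit → M)} (h : DefinableOn c A E) :
    DefinableOn c A {w | ∃ x ∈ A, Sum.elim w (fun _ => x) ∈ E} := by
  let _ := CLOStr ι A (subColor c A)
  unfold DefinableOn
  convert Set.Definable.exists_of_finite (β := Unit) h using 1
  ext u
  simp only [Set.mem_preimage, Set.mem_ofPred_eq, Sum.comp_elim]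
  constructor
  · rintro ⟨x, hx, hu⟩
    exact ⟨fun _ => ⟨x, hx⟩, hu⟩
  · rintro ⟨y, hy⟩
    exact ⟨y (), (y ()).2, hy⟩

theorem definableOn_setOf_sat_of_isQF {θ : (CLOLang ι).Formula γ} (hθ : θ.IsQF) :
    DefinableOn c A {w | Sat M c θ w} := by
  let _ := CLOStr ι A (subColor c A)
  let _ := CLOStr ι M c
  let e : A ↪[CLOLang ι] M :=
    { toEmbedding := Function.Embedding.subtype _
      map_fun' := fun f => Empty.elim f
      map_rel' := fun R _ => by cases R <;> rfl }
  refine Set.empty_definable_iff.2 ⟨θ, ?_⟩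
  ext u
  have := hθ.realize_embedding e (v := u) (xs := default)
  simp only [Set.mem_preimage, Set.mem_ofPred_eq, Sat, Formula.Realize]
  rw [← this]
  exact Iff.of_eq (congrArg _ (Subsingleton.elim _ _))

theorem DefinableOn.exists_formula (h : DefinableOn c A E) :
    ∃ ψ : (CLOLang ι).Formula γ, ∀ u : γ → A,
      Sat A (subColor c A) ψ u ↔ Subtype.val ∘ u ∈ E := by
  let _ := CLOStr ι A (subColor c A)
  obtain ⟨ψ, hψ⟩ := Set.empty_definable_iff.1 h
  exact ⟨ψ, fun u => (Set.ext_iff.1 hψ u).symm⟩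

end DefinableOn

structure IsOrderedPartition {J : Type} [LinearOrder J] (P : J → Set M) : Prop where
  exists_mem : ∀ x, ∃ j, x ∈ P j
  lt_of_mem : ∀ {i j}, i < j → ∀ {x y}, x ∈ P i → y ∈ P j → x < y

theorem IsOrderedPartition.eq_of_mem {J : Type} [LinearOrder J] {P : J → Set M}
    (hP : IsOrderedPartition P) {i j : J} {x : M} (hi : x ∈ P i) (hj : x ∈ P j) : i = j := by
  rcases lt_trichotomy i j with h | h | h
  · exact absurd (hP.lt_of_mem h hi hj) (lt_irrefl x)
  · exact h
  · exact absurd (hP.lt_of_mem h hj hi) (lt_irrefl x)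

section Decomposable

variable {J : Type} (P : J → Set M) {β β' : Type}

def PartDefinable (s : β → J) (j : J) (D : Set (β → M)) : Prop :=
  ∃ E : Set ({i // s i = j} → M), DefinableOn c (P j) E ∧
    D = (fun w => w ∘ Subtype.val) ⁻¹' E

/-- The Feferman–Vaught normal form. -/
def Decomposable (s : β → J) (S : Set (β → M)) : Prop :=
  ∃ (R : Type) (_ : Finite R) (D : R → J → Set (β → M)),
    (∀ r j, PartDefinable c P s j (D r j)) ∧ S = ⋃ r, ⋂ j, D r j

variable {c P} {s : β → J} {j : J}

theorem PartDefinable.compl {D : Set (β → M)} (h : PartDefinable c P s j D) :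
    PartDefinable c P s j Dᶜ := by
  obtain ⟨E, hE, rfl⟩ := h
  exact ⟨Eᶜ, hE.compl, rfl⟩

theorem partDefinable_iInter {R : Type} [Finite R] {D : R → Set (β → M)}
    (h : ∀ r, PartDefinable c P s j (D r)) : PartDefinable c P s j (⋂ r, D r) := by
  choose E hE hD using h
  exact ⟨⋂ r, E r, definableOn_iInter hE, by simp only [hD, Set.preimage_iInter]⟩

theorem partDefinable_univ : PartDefinable c P s j (Set.univ : Set (β → M)) :=
  ⟨Set.univ, by simpa using definableOn_const (c := c) (A := P j) (γ := {i // s i = j}) True,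
    rfl⟩

theorem PartDefinable.preimage_comp {t : β' → J} (g : β → β') (hg : ∀ i, t (g i) = s i)
    {D : Set (β → M)} (h : PartDefinable c P s j D) :
    PartDefinable c P t j ((fun w => w ∘ g) ⁻¹' D) := by
  obtain ⟨E, hE, rfl⟩ := h
  exact ⟨_, hE.preimage_comp (fun i => ⟨g i, (hg i).trans i.2⟩), rfl⟩

theorem partDefinable_setOf_sat_of_isQF {γ : Type} {θ : (CLOLang ι).Formula γ} (hθ : θ.IsQF)
    (f : γ → β) (hf : ∀ a, s (f a) = j) : PartDefinable c P s j {w | Sat M c θ (w ∘ f)} :=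
  ⟨_, (definableOn_setOf_sat_of_isQF hθ).preimage_comp fun a => ⟨f a, hf a⟩, rfl⟩

theorem Decomposable.of_partDefinable {D : Set (β → M)} (h : PartDefinable c P s j D) :
    Decomposable c P s D := by
  classical
  refine ⟨Unit, inferInstance, fun _ j' => if j' = j then D else Set.univ,
    fun _ j' => ?_, ?_⟩
  · dsimp only
    split_ifs with hj
    · exact hj ▸ h
    · exact partDefinable_univ
  · ext w
    simp only [Set.iUnion_const, Set.mem_iInter]
    exact ⟨fun hw j' => by split_ifs <;> simp [hw], fun hw => by simpa using hw j⟩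

theorem decomposable_iUnion {R : Type} [Finite R] {S : R → Set (β → M)}
    (h : ∀ r, Decomposable c P s (S r)) : Decomposable c P s (⋃ r, S r) := by
  choose T hT D hD hS using h
  refine ⟨Σ r, T r, inferInstance, fun p => D p.1 p.2, fun p => hD p.1 p.2, ?_⟩
  rw [Set.iUnion_sigma]
  simp only [hS]

theorem decomposable_empty : Decomposable c P s (∅ : Set (β → M)) :=
  ⟨Empty, inferInstance, Empty.elim, fun r => r.elim, by simp⟩

theorem Decomposable.union {S S' : Set (β → M)} (h : Decomposable c P s S)
    (h' : Decomposable c P s S') : Decomposable c P s (S ∪ S') := by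
  rw [Set.union_eq_iUnion]
  exact decomposable_iUnion fun b => by cases b <;> assumption

theorem Decomposable.preimage_comp {t : β' → J} (g : β → β') (hg : ∀ i, t (g i) = s i)
    {S : Set (β → M)} (h : Decomposable c P s S) :
    Decomposable c P t ((fun w => w ∘ g) ⁻¹' S) := by
  obtain ⟨R, _, D, hD, rfl⟩ := h
  refine ⟨R, inferInstance, fun r j => (fun w => w ∘ g) ⁻¹' D r j,
    fun r j => (hD r j).preimage_comp g hg, ?_⟩
  simp only [Set.preimage_iUnion, Set.preimage_iInter]

def oldVar (s : β → J) {j j' : J} (hj : j' ≠ j) :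
    {i : β ⊕ Unit // Sum.elim s (fun _ => j) i = j'} → {b // s b = j'}
  | ⟨.inl b, h⟩ => ⟨b, h⟩
  | ⟨.inr _, h⟩ => absurd h.symm hj

def newVar (s : β → J) (j : J) :
    {i : β ⊕ Unit // Sum.elim s (fun _ => j) i = j} → {b // s b = j} ⊕ Unit
  | ⟨.inl b, h⟩ => .inl ⟨b, h⟩
  | ⟨.inr u, _⟩ => .inr u

variable [Finite J]

theorem Decomposable.compl {S : Set (β → M)} (h : Decomposable c P s S) :
    Decomposable c P s Sᶜ := by
  obtain ⟨R, _, D, hD, rfl⟩ := h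
  refine ⟨R → J, inferInstance, fun f j => ⋂ r : {r // f r = j}, (D r j)ᶜ,
    fun f j => partDefinable_iInter fun r => (hD r j).compl, ?_⟩
  ext w
  simp only [Set.compl_iUnion, Set.compl_iInter, Set.mem_iInter, Set.mem_iUnion,
    Set.mem_compl_iff, Subtype.forall]
  constructor
  · intro hw
    choose f hf using hw
    exact ⟨f, fun j r hr => hr ▸ hf r⟩
  · rintro ⟨f, hf⟩ r
    exact ⟨f r, hf (f r) r rfl⟩

theorem decomposable_univ : Decomposable c P s (Set.univ : Set (β → M)) := by
  simpa using (decomposable_empty (c := c) (P := P) (s := s)).compl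

theorem decomposable_iInter {R : Type} [Finite R] {S : R → Set (β → M)}
    (h : ∀ r, Decomposable c P s (S r)) : Decomposable c P s (⋂ r, S r) := by
  simpa using (decomposable_iUnion fun r => (h r).compl).compl

theorem Decomposable.inter {S S' : Set (β → M)} (h : Decomposable c P s S)
    (h' : Decomposable c P s S') : Decomposable c P s (S ∩ S') := by
  simpa [Set.compl_union] using (h.compl.union h'.compl).compl

theorem decomposable_exists_mem_iInter {D : J → Set (β ⊕ Unit → M)}
    (hD : ∀ j', PartDefinable c P (Sum.elim s fun _ => j) j' (D j')) :
    Decomposable c P s {w | ∃ x ∈ P j, ∀ j', Sum.elim w (fun _ => x) ∈ D j'} := by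
  -- Only the side of sort `j` sees the new variable; the others are relabelled to old variables.
  choose E hE hDE using hD
  obtain rfl : D = fun j' => (fun w => w ∘ Subtype.val) ⁻¹' E j' := funext hDE
  have h_new : ∀ (w : β → M) x, Sum.elim w (fun _ => x) ∘ Subtype.val =
      Sum.elim (w ∘ Subtype.val) (fun _ => x) ∘ newVar s j := by
    intro w x
    funext ⟨i, hi⟩
    cases i <;> rfl
  have h_old : ∀ j' (hj : j' ≠ j) (w : β → M) x,
      Sum.elim w (fun _ => x) ∘ Subtype.val = w ∘ Subtype.val ∘ oldVar s hj := by
    intro j' hj w x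
    funext ⟨i, hi⟩
    cases i with
    | inl b => rfl
    | inr u => exact absurd hi.symm hj
  have : {w | ∃ x ∈ P j, ∀ j', Sum.elim w (fun _ => x) ∈ (fun w => w ∘ Subtype.val) ⁻¹' E j'} =
      (fun w => w ∘ Subtype.val) ⁻¹'
          {u | ∃ x ∈ P j, Sum.elim u (fun _ => x) ∈ (fun v => v ∘ newVar s j) ⁻¹' E j} ∩
        ⋂ j' : {j' // j' ≠ j}, (fun w => w ∘ Subtype.val ∘ oldVar s j'.2) ⁻¹' E j' := by
    ext w
    simp only [Set.mem_preimage, Set.mem_ofPred_eq, Set.mem_inter_iff, Set.mem_iInter,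
      Subtype.forall]
    constructor
    · rintro ⟨x, hx, hw⟩
      exact ⟨⟨x, hx, h_new w x ▸ hw j⟩, fun j' hj => h_old j' hj w x ▸ hw j'⟩
    · rintro ⟨⟨x, hx, hw⟩, hw'⟩
      refine ⟨x, hx, fun j' => ?_⟩
      by_cases hj : j' = j
      · subst hj
        exact (h_new w x).symm ▸ hw
      · exact (h_old j' hj w x).symm ▸ hw' j' hj
  rw [this]
  exact Decomposable.inter (.of_partDefinable ⟨_, ((hE j).preimage_comp _).exists_mem, rfl⟩)
    (decomposable_iInter fun j' => .of_partDefinable ⟨_, (hE j').preimage_comp _, rfl⟩)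

theorem Decomposable.exists_mem {S : Set (β ⊕ Unit → M)}
    (h : Decomposable c P (Sum.elim s fun _ => j) S) :
    Decomposable c P s {w | ∃ x ∈ P j, Sum.elim w (fun _ => x) ∈ S} := by
  obtain ⟨R, _, D, hD, rfl⟩ := h
  have : {w | ∃ x ∈ P j, Sum.elim w (fun _ => x) ∈ ⋃ r, ⋂ j', D r j'} =
      ⋃ r, {w | ∃ x ∈ P j, ∀ j', Sum.elim w (fun _ => x) ∈ D r j'} := by
    ext w
    simp only [Set.mem_ofPred_eq, Set.mem_iUnion, Set.mem_iInter]
    exact ⟨fun ⟨x, hx, r, hr⟩ => ⟨r, x, hx, hr⟩, fun ⟨r, x, hx, hr⟩ => ⟨x, hx, r, hr⟩⟩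
  rw [this]
  exact decomposable_iUnion fun r => decomposable_exists_mem_iInter (hD r)

theorem Decomposable.definableOn_sumElim {γ δ : Type} {s : γ ⊕ δ → J} {j₀ : J}
    (hs₁ : ∀ g, s (.inl g) = j₀) (hs₂ : ∀ d, s (.inr d) ≠ j₀) {S : Set (γ ⊕ δ → M)}
    (h : Decomposable c P s S) (a : δ → M) :
    DefinableOn c (P j₀) {u | Sum.elim u a ∈ S} := by
  obtain ⟨R, _, D, hD, rfl⟩ := h
  simp only [Set.mem_iUnion, Set.mem_iInter, Set.ofPred_exists, Set.ofPred_forall]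
  refine definableOn_iUnion fun r => definableOn_iInter fun j => ?_
  obtain ⟨E, hE, hDE⟩ := hD r j
  rw [hDE]
  by_cases hj : j = j₀
  · subst hj
    let π : {i // s i = j} → γ := fun
      | ⟨.inl g, _⟩ => g
      | ⟨.inr d, h⟩ => absurd h (hs₂ d)
    have hπ : ∀ u : γ → M, Sum.elim u a ∘ Subtype.val = u ∘ π := by
      intro u
      funext ⟨i, hi⟩
      cases i with
      | inl g => rfl
      | inr d => exact absurd hi (hs₂ d)
    simp only [Set.mem_preimage, hπ]
    exact hE.preimage_comp π
  · let π : {i // s i = j} → δ := fun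
      | ⟨.inl g, h⟩ => absurd ((hs₁ g).symm.trans h) (Ne.symm hj)
      | ⟨.inr d, _⟩ => d
    have hπ : ∀ u : γ → M, Sum.elim u a ∘ Subtype.val = a ∘ π := by
      intro u
      funext ⟨i, hi⟩
      cases i with
      | inl g => exact absurd ((hs₁ g).symm.trans hi) (Ne.symm hj)
      | inr d => rfl
    simp only [Set.mem_preimage, hπ]
    exact definableOn_const (a ∘ π ∈ E)

end Decomposable

theorem exists_var_eq {γ : Type} (t : (CLOLang ι).Term γ) : ∃ i, t = Term.var i := by
  cases t with
  | var i => exact ⟨i, rfl⟩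
  | func f _ => exact Empty.elim f

section FefermanVaught

variable {J : Type} [LinearOrder J] [Finite J] {P : J → Set M}

open BoundedFormula in
theorem IsOrderedPartition.exists_decomposable (hP : IsOrderedPartition P) {α : Type} {k : ℕ}
    (φ : (CLOLang ι).BoundedFormula α k) :
    ∀ s : α ⊕ Fin k → J, ∃ S, Decomposable c P s S ∧
      ∀ w, (∀ i, w i ∈ P (s i)) → (Sat M c φ.toFormula w ↔ w ∈ S) := by
  let _ := CLOStr ι M c
  induction φ with
  | falsum => exact fun s => ⟨∅, decomposable_empty, fun w _ => iff_of_false (fun h => h) id⟩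
  | equal t₁ t₂ =>
    intro s
    obtain ⟨i₁, rfl⟩ := exists_var_eq t₁
    obtain ⟨i₂, rfl⟩ := exists_var_eq t₂
    have hsat : ∀ w, Sat M c (equal (var i₁) (var i₂)).toFormula w ↔ w i₁ = w i₂ := by
      intro w
      simp [Sat]
    simp only [hsat]
    by_cases h : s i₁ = s i₂
    · refine ⟨_, .of_partDefinable (partDefinable_setOf_sat_of_isQF
        (IsAtomic.equal (var (Sum.inl 0)) (var (Sum.inl 1))).isQF ![i₁, i₂] (j := s i₂) ?_),
        fun w _ => ?_⟩
      · intro a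
        fin_cases a <;> simp [h]
      · simp [Sat, Formula.Realize]
    · refine ⟨∅, decomposable_empty, fun w hw => ?_⟩
      simpa using fun he : w i₁ = w i₂ => h (hP.eq_of_mem (hw i₁) (he ▸ hw i₂))
  | rel R ts =>
    intro s
    choose σ hσ using fun a => exists_var_eq (ts a)
    obtain rfl : ts = fun a => var (σ a) := funext hσ
    by_cases hsort : ∃ j, ∀ a, s (σ a) = j
    · obtain ⟨j, hj⟩ := hsort
      refine ⟨_, .of_partDefinable (partDefinable_setOf_sat_of_isQF
        (IsAtomic.rel R fun a => var (Sum.inl a)).isQF σ hj), fun w _ => ?_⟩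
      simp only [Sat, Formula.Realize, realize_rel]
      rfl
    · cases R with
      | color i => exact absurd ⟨s (σ 0), fun a => by rw [Subsingleton.elim a 0]⟩ hsort
      | lt =>
        have hsat : ∀ w, Sat M c (rel CLORel.lt fun a => var (σ a)).toFormula w ↔
            w (σ 0) < w (σ 1) := by
          intro w
          simp [Sat]
          rfl
        simp only [hsat]
        rcases lt_trichotomy (s (σ 0)) (s (σ 1)) with h | h | h
        · exact ⟨Set.univ, decomposable_univ, fun w hw => by
            simpa using hP.lt_of_mem h (hw _) (hw _)⟩
        · refine absurd ⟨s (σ 1), fun a => ?_⟩ hsort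
          fin_cases a
          exacts [h, rfl]
        · exact ⟨∅, decomposable_empty, fun w hw => by
            simpa using (hP.lt_of_mem h (hw _) (hw _)).le⟩
  | imp φ₁ φ₂ ih₁ ih₂ =>
    intro s
    obtain ⟨S₁, hS₁, h₁⟩ := ih₁ s
    obtain ⟨S₂, hS₂, h₂⟩ := ih₂ s
    refine ⟨S₁ᶜ ∪ S₂, hS₁.compl.union hS₂, fun w hw => ?_⟩
    have himp : Sat M c (φ₁.imp φ₂).toFormula w ↔
        (Sat M c φ₁.toFormula w → Sat M c φ₂.toFormula w) := by
      simp [Sat]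
    rw [himp, h₁ w hw, h₂ w hw, Set.mem_union, Set.mem_compl_iff, imp_iff_not_or]
  | @all n φ ih =>
    intro s
    let g : α ⊕ Fin (n + 1) → (α ⊕ Fin n) ⊕ Unit :=
      Sum.elim (Sum.inl ∘ Sum.inl) (Fin.snoc (Sum.inl ∘ Sum.inr) (Sum.inr ()))
    have hg : ∀ (w : α ⊕ Fin n → M) x, Sum.elim w (fun _ => x) ∘ g =
        Sum.elim (w ∘ Sum.inl) (Fin.snoc (w ∘ Sum.inr) x) := by
      intro w x
      ext (a | i)
      · rfl
      · change (Sum.elim w (fun _ => x) ∘ Fin.snoc (Sum.inl ∘ Sum.inr) (Sum.inr ())) i = _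
        rw [Fin.comp_snoc]
        rfl
    choose S hS hφ using fun j => ih (Sum.elim s (fun _ => j) ∘ g)
    refine ⟨(⋃ j, {w | ∃ x ∈ P j, Sum.elim w (fun _ => x) ∈ ((fun v => v ∘ g) ⁻¹' S j)ᶜ})ᶜ,
      (decomposable_iUnion fun j => ((hS j).preimage_comp g fun _ => rfl).compl.exists_mem).compl,
      fun w hw => ?_⟩
    have hsat : ∀ j, ∀ x ∈ P j, Sat M c φ.toFormula (Sum.elim w (fun _ => x) ∘ g) ↔
        Sum.elim w (fun _ => x) ∘ g ∈ S j := by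
      refine fun j x hx => hφ j _ fun i => ?_
      change Sum.elim w (fun _ => x) (g i) ∈ P (Sum.elim s (fun _ => j) (g i))
      rcases g i with i | _
      · exact hw i
      · exact hx
    have hall : Sat M c (all φ).toFormula w ↔
        ∀ x, Sat M c φ.toFormula (Sum.elim w (fun _ => x) ∘ g) := by
      simp only [Sat, realize_toFormula, realize_all, hg, Sum.elim_comp_inl, Sum.elim_comp_inr]
    rw [hall]
    simp only [Set.mem_compl_iff, Set.mem_iUnion, Set.mem_ofPred_eq, Set.mem_preimage,
      not_exists, not_and, not_not]
    exact ⟨fun h j x hx => (hsat j x hx).1 (h x),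
      fun h x => (hP.exists_mem x).elim fun j hx => (hsat j x hx).2 (h j x hx)⟩

theorem IsOrderedPartition.exists_formula_iff_sat (hP : IsOrderedPartition P) {γ δ : Type}
    (j₀ : J) (φ : (CLOLang ι).Formula (γ ⊕ δ)) (a : δ → M) (ha : ∀ d, a d ∉ P j₀) :
    ∃ ψ : (CLOLang ι).Formula γ, ∀ u : γ → P j₀,
      Sat (P j₀) (subColor c (P j₀)) ψ u ↔ Sat M c φ (Sum.elim (Subtype.val ∘ u) a) := by
  choose sa hsa using fun d => hP.exists_mem (a d)
  let s : γ ⊕ δ → J := Sum.elim (fun _ => j₀) sa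
  let g : (γ ⊕ δ) ⊕ Fin 0 → γ ⊕ δ := Sum.elim id finZeroElim
  obtain ⟨S, hS, hφ⟩ := hP.exists_decomposable c φ (s ∘ g)
  obtain ⟨ψ, hψ⟩ := ((hS.preimage_comp g fun _ => rfl).definableOn_sumElim (fun _ => rfl)
    (fun d (hd : sa d = j₀) => ha d (hd ▸ hsa d)) a).exists_formula
  refine ⟨ψ, fun u => (hψ u).trans ?_⟩
  have hsorted : ∀ i, (Sum.elim (Subtype.val ∘ u) a ∘ g) i ∈ P ((s ∘ g) i) := by
    rintro ((x | d) | z)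
    exacts [(u x).2, hsa d, z.elim0]
  have hsat : ∀ w : γ ⊕ δ → M, Sat M c φ.toFormula (w ∘ g) ↔ Sat M c φ w := by
    intro w
    let _ := CLOStr ι M c
    simp only [Sat, BoundedFormula.realize_toFormula]
    change BoundedFormula.Realize φ w (w ∘ g ∘ Sum.inr) ↔ BoundedFormula.Realize φ w default
    rw [Subsingleton.elim (w ∘ g ∘ Sum.inr) default]
  exact (hφ _ hsorted).symm.trans (hsat _)

end FefermanVaught

/-- The upper piece is not `{x | ∀ b ∈ B, b < x}`, so that this is a partition also when
`B = ∅`. -/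
def convexParts (B : Set M) : Fin 3 → Set M :=
  ![{x | ∀ b ∈ B, x < b}, B, {x | x ∉ B ∧ ∃ b ∈ B, b < x}]

theorem isOrderedPartition_convexParts {B : Set M} (hB : B.OrdConnected) :
    IsOrderedPartition (convexParts B) where
  exists_mem x := by
    by_cases hx : x ∈ B
    · exact ⟨1, hx⟩
    by_cases hlt : ∃ b ∈ B, b < x
    · exact ⟨2, hx, hlt⟩
    · simp only [not_exists, not_and, not_lt] at hlt
      exact ⟨0, fun b hb => (hlt b hb).lt_of_ne fun h => hx (h ▸ hb)⟩
  lt_of_mem {i j} hij x y hx hy := by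
    fin_cases i <;> fin_cases j <;> simp [convexParts] at hij hx hy
    · exact hx y hy
    · obtain ⟨b, hb, hby⟩ := hy.2
      exact (hx b hb).trans hby
    · obtain ⟨b, hb, hby⟩ := hy.2
      by_contra! hyx
      exact hy.1 (hB.out hb hx ⟨hby.le, hyx⟩)

end CLO

theorem stmt0_general {ι : Type} {M : Type} [LinearOrder M] (c : ι → Set M)
    (B : Set M) (hB : B.OrdConnected) {n m : ℕ}
    (φ : (CLOLang ι).Formula (Fin n ⊕ Fin m)) (a : Fin m → M) (ha : ∀ j, a j ∉ B) :
    ∃ ψ : (CLOLang ι).Formula (Fin n), ∀ b : Fin n → B,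
      Sat (↥B) (subColor c B) ψ b ↔ Sat M c φ (Sum.elim (fun i => (b i : M)) a) :=
  (CLO.isOrderedPartition_convexParts hB).exists_formula_iff_sat c 1 φ a ha

theorem stmt0 {ι : Type} [Countable ι] {M : Type} [LinearOrder M] (c : ι → Set M)
    (B : Set M) (hB : B.OrdConnected) {n m : ℕ}
    (φ : (CLOLang ι).Formula (Fin n ⊕ Fin m)) (a : Fin m → M) (ha : ∀ j, a j ∉ B) :
    ∃ ψ : (CLOLang ι).Formula (Fin n), ∀ b : Fin n → B,
      Sat (↥B) (subColor c B) ψ b ↔ Sat M c φ (Sum.elim (fun i => (b i : M)) a) :=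
  stmt0_general c B hB φ a ha
end

section
/- Let (I,<) be a linear order and, for each i ∈ I, let A_i and B_i be CLOs in the same language L_κ with A_i elementarily equivalent to B_i. Then Σ_{i∈I} A_i is elementarily equivalent to Σ_{i∈I} B_i. -/
open FirstOrder Language Set

/-!
A sentence of quantifier rank `n` whose colors lie in a finite set `S` cannot distinguish two CLOs
in which the duplicator wins the `n`-round Ehrenfeucht–Fraïssé game for the colors in `S`.
Conversely, over finitely many colors there are only finitely many rank-`n` Hintikka formulas,
so elementarily equivalent CLOs win every such game. In the sums, the duplicator answers a move in
block `i` by her strategy in the game between `A i` and `B i` started on the points already played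
in that block; the order and the colors of the sums are read off blockwise, so she keeps this
blockwise equivalence (`BlockEquiv`) for as many rounds as the games in the blocks last.
-/

namespace CLO

open BoundedFormula

variable {ι : Type}

def Realize {M : Type} [LinearOrder M] (c : ι → Set M) {k : ℕ}
    (φ : (CLOLang ι).BoundedFormula Empty k) (xs : Fin k → M) : Prop :=
  letI := CLOStr ι M c
  φ.Realize default xs

def ltAtom {k : ℕ} (j j' : Fin k) : (CLOLang ι).BoundedFormula Empty k :=
  .rel CLORel.lt ![&j, &j']

def eqAtom {k : ℕ} (j j' : Fin k) : (CLOLang ι).BoundedFormula Empty k :=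
  .equal &j &j'

def colorAtom {k : ℕ} (s : ι) (j : Fin k) : (CLOLang ι).BoundedFormula Empty k :=
  .rel (CLORel.color s) ![&j]

section Realize

variable {M : Type} [LinearOrder M] {c : ι → Set M} {k : ℕ} {xs : Fin k → M}

@[simp] lemma realize_not {φ : (CLOLang ι).BoundedFormula Empty k} :
    Realize c φ.not xs ↔ ¬ Realize c φ xs :=
  Iff.rfl

@[simp] lemma realize_inf {φ ψ : (CLOLang ι).BoundedFormula Empty k} :
    Realize c (φ ⊓ ψ) xs ↔ Realize c φ xs ∧ Realize c ψ xs :=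
  letI := CLOStr ι M c; BoundedFormula.realize_inf

@[simp] lemma realize_all {φ : (CLOLang ι).BoundedFormula Empty (k + 1)} :
    Realize c φ.all xs ↔ ∀ a : M, Realize c φ (Fin.snoc xs a) :=
  Iff.rfl

@[simp] lemma realize_ex {φ : (CLOLang ι).BoundedFormula Empty (k + 1)} :
    Realize c φ.ex xs ↔ ∃ a : M, Realize c φ (Fin.snoc xs a) :=
  letI := CLOStr ι M c; BoundedFormula.realize_ex

@[simp] lemma realize_iInf {β : Type} [Finite β] {f : β → (CLOLang ι).BoundedFormula Empty k} :
    Realize c (iInf f) xs ↔ ∀ b, Realize c (f b) xs :=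
  letI := CLOStr ι M c; BoundedFormula.realize_iInf

@[simp] lemma realize_iSup {β : Type} [Finite β] {f : β → (CLOLang ι).BoundedFormula Empty k} :
    Realize c (iSup f) xs ↔ ∃ b, Realize c (f b) xs :=
  letI := CLOStr ι M c; BoundedFormula.realize_iSup

lemma realize_sentence (φ : (CLOLang ι).Sentence) (xs : Fin 0 → M) :
    Realize c φ xs ↔ (letI := CLOStr ι M c; M ⊨ φ) := by
  rw [Subsingleton.elim xs default]
  rfl

end Realize

def qrank {L : Language} {α : Type} : ∀ {k : ℕ}, L.BoundedFormula α k → ℕ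
  | _, .falsum => 0
  | _, .equal _ _ => 0
  | _, .rel _ _ => 0
  | _, .imp φ ψ => max (qrank φ) (qrank ψ)
  | _, .all φ => qrank φ + 1

def colors [DecidableEq ι] {α : Type} : ∀ {k : ℕ}, (CLOLang ι).BoundedFormula α k → Finset ι
  | _, .falsum => ∅
  | _, .equal _ _ => ∅
  | _, .rel CLORel.lt _ => ∅
  | _, .rel (CLORel.color s) _ => {s}
  | _, .imp φ ψ => colors φ ∪ colors ψ
  | _, .all φ => colors φ

section EFEquiv

variable {M N : Type} [LinearOrder M] [LinearOrder N]

def AtomicAgree (S : Finset ι) (cM : ι → Set M) (cN : ι → Set N) {k : ℕ}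
    (xs : Fin k → M) (ys : Fin k → N) : Prop :=
  ∀ j j' : Fin k, (xs j < xs j' ↔ ys j < ys j') ∧ (xs j = xs j' ↔ ys j = ys j') ∧
    ∀ s ∈ S, (xs j ∈ cM s ↔ ys j ∈ cN s)

/-- `EFEquiv S cM cN n xs ys`: the duplicator wins the `n`-round Ehrenfeucht–Fraïssé game
from the position `(xs, ys)`, for the colors in `S`. -/
def EFEquiv (S : Finset ι) (cM : ι → Set M) (cN : ι → Set N) :
    ℕ → ∀ {k : ℕ}, (Fin k → M) → (Fin k → N) → Prop
  | 0, _, xs, ys => AtomicAgree S cM cN xs ys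
  | n + 1, _, xs, ys => AtomicAgree S cM cN xs ys ∧
      (∀ a : M, ∃ b : N, EFEquiv S cM cN n (Fin.snoc xs a) (Fin.snoc ys b)) ∧
      (∀ b : N, ∃ a : M, EFEquiv S cM cN n (Fin.snoc xs a) (Fin.snoc ys b))

variable {S : Finset ι} {cM : ι → Set M} {cN : ι → Set N} {n k : ℕ}
  {xs : Fin k → M} {ys : Fin k → N}

lemma AtomicAgree.symm (h : AtomicAgree S cM cN xs ys) : AtomicAgree S cN cM ys xs :=
  fun j j' =>
    ⟨(h j j').1.symm, (h j j').2.1.symm, fun s hs => ((h j j').2.2 s hs).symm⟩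

lemma AtomicAgree.comp {k' : ℕ} (h : AtomicAgree S cM cN xs ys) (ρ : Fin k' → Fin k) :
    AtomicAgree S cM cN (xs ∘ ρ) (ys ∘ ρ) :=
  fun j j' => h (ρ j) (ρ j')

namespace EFEquiv

lemma atomicAgree (h : EFEquiv S cM cN n xs ys) : AtomicAgree S cM cN xs ys := by
  cases n with
  | zero => exact h
  | succ n => exact h.1

lemma of_succ (h : EFEquiv S cM cN (n + 1) xs ys) : EFEquiv S cM cN n xs ys := by
  induction n generalizing k with
  | zero => exact h.1
  | succ n ih =>
      exact ⟨h.1, fun a => (h.2.1 a).imp fun _ => ih, fun b => (h.2.2 b).imp fun _ => ih⟩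

lemma symm (h : EFEquiv S cM cN n xs ys) : EFEquiv S cN cM n ys xs := by
  induction n generalizing k with
  | zero => exact AtomicAgree.symm h
  | succ n ih =>
      exact ⟨h.1.symm, fun b => (h.2.2 b).imp fun _ => ih, fun a => (h.2.1 a).imp fun _ => ih⟩

lemma comp {k' : ℕ} (h : EFEquiv S cM cN n xs ys) (ρ : Fin k' → Fin k) :
    EFEquiv S cM cN n (xs ∘ ρ) (ys ∘ ρ) := by
  induction n generalizing k k' with
  | zero => exact AtomicAgree.comp h ρ
  | succ n ih =>
      -- a new point played against `(xs ∘ ρ, ys ∘ ρ)` is answered as against `(xs, ys)`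
      have snoc_comp {P : Type} (zs : Fin k → P) (z : P) :
          Fin.snoc (zs ∘ ρ) z = Fin.snoc zs z ∘ Fin.snoc (Fin.castSucc ∘ ρ) (Fin.last k) := by
        ext l
        refine Fin.lastCases ?_ (fun l => ?_) l <;> simp
      refine ⟨h.1.comp ρ, fun a => ?_, fun b => ?_⟩
      · obtain ⟨b, hb⟩ := h.2.1 a
        exact ⟨b, by rw [snoc_comp xs, snoc_comp ys]; exact ih hb _⟩
      · obtain ⟨a, ha⟩ := h.2.2 b
        exact ⟨a, by rw [snoc_comp xs, snoc_comp ys]; exact ih ha _⟩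

lemma of_forall_exists {k' : ℕ} {xs' : Fin k' → M} {ys' : Fin k' → N}
    (h : EFEquiv S cM cN n xs ys) (hsub : ∀ l, ∃ j, xs j = xs' l ∧ ys j = ys' l) :
    EFEquiv S cM cN n xs' ys' := by
  choose ρ hρx hρy using hsub
  have hx : xs ∘ ρ = xs' := funext hρx
  have hy : ys ∘ ρ = ys' := funext hρy
  exact hx ▸ hy ▸ h.comp ρ

end EFEquiv

lemma term_eq_var {k : ℕ} (t : (CLOLang ι).Term (Empty ⊕ Fin k)) : ∃ j : Fin k, t = &j := by
  rcases t with (e | j) | ⟨f, _⟩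
  · exact e.elim
  · exact ⟨j, rfl⟩
  · exact (f : Empty).elim

lemma EFEquiv.realize_iff [DecidableEq ι] {k : ℕ} (φ : (CLOLang ι).BoundedFormula Empty k)
    {n : ℕ} (hq : qrank φ ≤ n) (hc : colors φ ⊆ S) {xs : Fin k → M} {ys : Fin k → N}
    (h : EFEquiv S cM cN n xs ys) : Realize cM φ xs ↔ Realize cN φ ys := by
  induction φ generalizing n with
  | falsum => exact Iff.rfl
  | equal t₁ t₂ =>
      obtain ⟨j₁, rfl⟩ := term_eq_var t₁
      obtain ⟨j₂, rfl⟩ := term_eq_var t₂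
      exact (h.atomicAgree j₁ j₂).2.1
  | rel R ts =>
      choose js hjs using fun l => term_eq_var (ts l)
      obtain rfl : ts = fun l => &(js l) := funext hjs
      cases R with
      | lt => exact (h.atomicAgree (js 0) (js 1)).1
      | color s => exact (h.atomicAgree (js 0) (js 0)).2.2 s (hc (by simp [colors]))
  | imp φ ψ ihφ ihψ =>
      simp only [qrank, max_le_iff] at hq
      simp only [colors, Finset.union_subset_iff] at hc
      exact imp_congr (ihφ hq.1 hc.1 h) (ihψ hq.2 hc.2 h)
  | all φ ih =>
      cases n with
      | zero => exact absurd hq (by simp [qrank])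
      | succ n =>
          have hq' : qrank φ ≤ n := by simpa [qrank] using hq
          simp only [realize_all]
          exact ⟨fun hall b => (h.2.2 b).elim fun a ha => (ih hq' hc ha).1 (hall a),
            fun hall a => (h.2.1 a).elim fun b hb => (ih hq' hc hb).2 (hall b)⟩

end EFEquiv

section Hintikka

open Classical

variable {M N : Type} [LinearOrder M] [LinearOrder N] {cM : ι → Set M} {cN : ι → Set N}
  (S : Finset ι)

noncomputable def atoms (k : ℕ) : Finset ((CLOLang ι).BoundedFormula Empty k) :=
  (Finset.univ.image fun p : Fin k × Fin k => ltAtom p.1 p.2) ∪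
    (Finset.univ.image fun p : Fin k × Fin k => eqAtom p.1 p.2) ∪
    ((S ×ˢ Finset.univ).image fun p => colorAtom p.1 p.2)

noncomputable def diagram (k : ℕ) (s : Finset ((CLOLang ι).BoundedFormula Empty k)) :
    (CLOLang ι).BoundedFormula Empty k :=
  iInf fun φ : atoms S k => if φ.1 ∈ s then φ.1 else φ.1.not

noncomputable def hintikkaSucc (k : ℕ) (s : Finset ((CLOLang ι).BoundedFormula Empty k))
    (t : Finset ((CLOLang ι).BoundedFormula Empty (k + 1))) :
    (CLOLang ι).BoundedFormula Empty k :=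
  diagram S k s ⊓ (iInf (fun ψ : t => ψ.1.ex) ⊓ (iSup fun ψ : t => ψ.1).all)

noncomputable def hintikkaSet : ℕ → (k : ℕ) → Finset ((CLOLang ι).BoundedFormula Empty k)
  | 0, k => (atoms S k).powerset.image (diagram S k)
  | n + 1, k => ((atoms S k).powerset ×ˢ (hintikkaSet n (k + 1)).powerset).image
      fun p => hintikkaSucc S k p.1 p.2

noncomputable def trueAtoms (c : ι → Set M) {k : ℕ} (xs : Fin k → M) :
    Finset ((CLOLang ι).BoundedFormula Empty k) :=
  (atoms S k).filter (Realize c · xs)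

/-- The successor types of `xs` are collected inside the finite set `hintikkaSet S n (k + 1)`:
this is what makes their conjunction a formula. -/
noncomputable def hintikka (c : ι → Set M) :
    ℕ → ∀ k : ℕ, (Fin k → M) → (CLOLang ι).BoundedFormula Empty k
  | 0, k, xs => diagram S k (trueAtoms S c xs)
  | n + 1, k, xs => hintikkaSucc S k (trueAtoms S c xs)
      ((hintikkaSet S n (k + 1)).filter fun ψ => ∃ a, ψ = hintikka c n (k + 1) (Fin.snoc xs a))

variable {S} {k : ℕ} {xs : Fin k → M} {ys : Fin k → N}

lemma hintikka_mem_hintikkaSet (c : ι → Set M) (n : ℕ) (xs : Fin k → M) :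
    hintikka S c n k xs ∈ hintikkaSet S n k := by
  cases n with
  | zero => exact Finset.mem_image_of_mem _ (Finset.mem_powerset.2 (Finset.filter_subset _ _))
  | succ n =>
      rw [hintikka, hintikkaSet]
      exact Finset.mem_image.2 ⟨(_, _), Finset.mem_product.2
        ⟨Finset.mem_powerset.2 (Finset.filter_subset _ _),
          Finset.mem_powerset.2 (Finset.filter_subset _ _)⟩, rfl⟩

lemma realize_diagram_trueAtoms : Realize cM (diagram S k (trueAtoms S cM xs)) xs := by
  simp only [diagram, realize_iInf]
  intro φ
  by_cases hφ : Realize cM φ.1 xs <;> simp [trueAtoms, hφ]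

lemma AtomicAgree.of_realize_diagram (h : Realize cN (diagram S k (trueAtoms S cM xs)) ys) :
    AtomicAgree S cM cN xs ys := by
  have hatoms : ∀ φ ∈ atoms S k, Realize cM φ xs ↔ Realize cN φ ys := by
    intro φ hφ
    have := (realize_iInf.1 h) ⟨φ, hφ⟩
    by_cases hx : Realize cM φ xs <;> simp_all [trueAtoms]
  intro j j'
  refine ⟨hatoms (ltAtom j j') (by simp [atoms]), hatoms (eqAtom j j') (by simp [atoms]),
    fun s hs => hatoms (colorAtom s j) (Finset.mem_union_right _
      (Finset.mem_image.2 ⟨(s, j), Finset.mem_product.2 ⟨hs, Finset.mem_univ j⟩, rfl⟩))⟩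

lemma realize_hintikka (n : ℕ) : Realize cM (hintikka S cM n k xs) xs := by
  induction n generalizing k with
  | zero => exact realize_diagram_trueAtoms
  | succ n ih =>
      simp only [hintikka, hintikkaSucc, realize_inf, realize_iInf, realize_all, realize_iSup]
      refine ⟨realize_diagram_trueAtoms, fun ⟨ψ, hψ⟩ => ?_, fun a => ?_⟩
      · obtain ⟨a, rfl⟩ := (Finset.mem_filter.1 hψ).2
        exact realize_ex.2 ⟨a, ih⟩
      · exact ⟨⟨_, Finset.mem_filter.2 ⟨hintikka_mem_hintikkaSet _ _ _, a, rfl⟩⟩, ih⟩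

lemma EFEquiv.of_realize_hintikka {n : ℕ} (h : Realize cN (hintikka S cM n k xs) ys) :
    EFEquiv S cM cN n xs ys := by
  induction n generalizing k with
  | zero => exact AtomicAgree.of_realize_diagram h
  | succ n ih =>
      simp only [hintikka, hintikkaSucc, realize_inf, realize_iInf, realize_all, realize_iSup] at h
      obtain ⟨hdiag, hforth, hback⟩ := h
      refine ⟨AtomicAgree.of_realize_diagram hdiag, fun a => ?_, fun b => ?_⟩
      · obtain ⟨b, hb⟩ := realize_ex.1 (hforth
          ⟨_, Finset.mem_filter.2 ⟨hintikka_mem_hintikkaSet _ _ _, a, rfl⟩⟩)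
        exact ⟨b, ih hb⟩
      · obtain ⟨⟨ψ, hψ⟩, hb⟩ := hback b
        obtain ⟨a, rfl⟩ := (Finset.mem_filter.1 hψ).2
        exact ⟨a, ih hb⟩

lemma EFEquiv.of_cloEquiv (h : CLOEquiv ι M cM N cN) (S : Finset ι) (n : ℕ)
    (xs : Fin 0 → M) (ys : Fin 0 → N) : EFEquiv S cM cN n xs ys := by
  let := CLOStr ι M cM
  let := CLOStr ι N cN
  refine EFEquiv.of_realize_hintikka ((realize_sentence _ _).2 ?_)
  exact (Language.elementarilyEquivalent_iff.1 h _).1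
    ((realize_sentence _ _).1 (realize_hintikka n))

end Hintikka

section Sum

variable {I : Type}

lemma exists_eq_toLex_mk {C : I → Type} (x : Σₗ i, C i) {i : I} (h : (ofLex x).1 = i) :
    ∃ a : C i, x = toLex ⟨i, a⟩ := by
  obtain ⟨i, a⟩ := x
  subst h
  exact ⟨a, rfl⟩

lemma toLex_mk_eq_toLex_mk_iff {C : I → Type} {i : I} {a b : C i} :
    (toLex ⟨i, a⟩ : Σₗ i, C i) = toLex ⟨i, b⟩ ↔ a = b := by
  simp

variable {A B : I → Type} {k : ℕ} {xs : Fin k → Σₗ i, A i} {ys : Fin k → Σₗ i, B i}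

lemma exists_block_tuples (hfst : ∀ j, (ofLex (xs j)).1 = (ofLex (ys j)).1) (i : I) :
    ∃ (m : ℕ) (js : Fin m → Fin k) (us : Fin m → A i) (vs : Fin m → B i),
      (∀ l, xs (js l) = toLex ⟨i, us l⟩) ∧ (∀ l, ys (js l) = toLex ⟨i, vs l⟩) ∧
      ∀ j u v, xs j = toLex ⟨i, u⟩ → ys j = toLex ⟨i, v⟩ → ∃ l, us l = u ∧ vs l = v := by
  classical
  have hmk (j : {j // (ofLex (xs j)).1 = i}) :
      ∃ (u : A i) (v : B i), xs j = toLex ⟨i, u⟩ ∧ ys j = toLex ⟨i, v⟩ := by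
    obtain ⟨u, hu⟩ := exists_eq_toLex_mk _ j.2
    obtain ⟨v, hv⟩ := exists_eq_toLex_mk _ ((hfst j).symm.trans j.2)
    exact ⟨u, v, hu, hv⟩
  choose u v hu hv using hmk
  let e := Fintype.equivFin {j // (ofLex (xs j)).1 = i}
  refine ⟨_, fun l => e.symm l, fun l => u (e.symm l), fun l => v (e.symm l),
    fun l => hu _, fun l => hv _, fun j u' v' hu' hv' => ⟨e ⟨j, by rw [hu']; rfl⟩, ?_⟩⟩
  simp only [Equiv.symm_apply_apply]
  constructor
  · simpa [hu'] using (hu ⟨j, _⟩).symm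
  · simpa [hv'] using (hv ⟨j, _⟩).symm

variable [∀ i, LinearOrder (A i)] [∀ i, LinearOrder (B i)]
  {cA : ∀ i, ι → Set (A i)} {cB : ∀ i, ι → Set (B i)} {S : Finset ι} {n : ℕ}

/-- `js` ranges over all families of positions lying in block `i`, in any order and with
repetitions. -/
def BlockEquiv (S : Finset ι) (cA : ∀ i, ι → Set (A i)) (cB : ∀ i, ι → Set (B i)) (n : ℕ)
    {k : ℕ} (xs : Fin k → Σₗ i, A i) (ys : Fin k → Σₗ i, B i) : Prop :=
  (∀ j, (ofLex (xs j)).1 = (ofLex (ys j)).1) ∧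
    ∀ (i : I) (m : ℕ) (js : Fin m → Fin k) (us : Fin m → A i) (vs : Fin m → B i),
      (∀ l, xs (js l) = toLex ⟨i, us l⟩) → (∀ l, ys (js l) = toLex ⟨i, vs l⟩) →
      EFEquiv S (cA i) (cB i) n us vs

lemma BlockEquiv.symm (h : BlockEquiv S cA cB n xs ys) : BlockEquiv S cB cA n ys xs :=
  ⟨fun j => (h.1 j).symm, fun i m js vs us hvs hus => (h.2 i m js us vs hus hvs).symm⟩

lemma BlockEquiv.of_cloEquiv (h : ∀ i, CLOEquiv ι (A i) (cA i) (B i) (cB i))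
    (xs : Fin 0 → Σₗ i, A i) (ys : Fin 0 → Σₗ i, B i) : BlockEquiv S cA cB n xs ys := by
  refine ⟨finZeroElim, fun i m js us vs _ _ => ?_⟩
  cases m with
  | zero => exact EFEquiv.of_cloEquiv (h i) S n us vs
  | succ m => exact (js 0).elim0

variable [LinearOrder I]

lemma toLex_mk_lt_toLex_mk_iff {C : I → Type} [∀ i, LinearOrder (C i)] {i : I} {a b : C i} :
    (toLex ⟨i, a⟩ : Σₗ i, C i) < toLex ⟨i, b⟩ ↔ a < b := by
  refine ⟨fun h => ?_, fun h => Sigma.Lex.right _ _ h⟩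
  cases h with
  | left _ _ h => exact absurd h (lt_irrefl i)
  | right _ _ h => exact h

lemma lt_iff_and_eq_iff_of_blockwise {C D : I → Type} [∀ i, LinearOrder (C i)]
    [∀ i, LinearOrder (D i)] {x x' : Σₗ i, C i} {y y' : Σₗ i, D i}
    (hx : (ofLex x).1 = (ofLex y).1) (hx' : (ofLex x').1 = (ofLex y').1)
    (hblock : ∀ i (a a' : C i) (b b' : D i), x = toLex ⟨i, a⟩ → x' = toLex ⟨i, a'⟩ →
      y = toLex ⟨i, b⟩ → y' = toLex ⟨i, b'⟩ → (a < a' ↔ b < b') ∧ (a = a' ↔ b = b')) :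
    (x < x' ↔ y < y') ∧ (x = x' ↔ y = y') := by
  obtain ⟨i, a⟩ := x
  obtain ⟨i', a'⟩ := x'
  obtain ⟨_, b⟩ := y
  obtain ⟨_, b'⟩ := y'
  obtain rfl : i = _ := hx
  obtain rfl : i' = _ := hx'
  rcases lt_trichotomy i i' with hlt | rfl | hgt
  · exact ⟨iff_of_true (Sigma.Lex.left _ _ hlt) (Sigma.Lex.left _ _ hlt),
      iff_of_false (fun h => hlt.ne (congrArg Sigma.fst h))
        (fun h => hlt.ne (congrArg Sigma.fst h))⟩
  · obtain ⟨hlt, heq⟩ := hblock i a a' b b' rfl rfl rfl rfl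
    exact ⟨toLex_mk_lt_toLex_mk_iff.trans (hlt.trans toLex_mk_lt_toLex_mk_iff.symm),
      toLex_mk_eq_toLex_mk_iff.trans (heq.trans toLex_mk_eq_toLex_mk_iff.symm)⟩
  · exact ⟨iff_of_false (not_lt_of_gt (Sigma.Lex.left _ _ hgt))
        (not_lt_of_gt (Sigma.Lex.left _ _ hgt)),
      iff_of_false (fun h => hgt.ne' (congrArg Sigma.fst h))
        (fun h => hgt.ne' (congrArg Sigma.fst h))⟩

lemma BlockEquiv.atomicAgree (h : BlockEquiv S cA cB n xs ys) :
    AtomicAgree S (sigmaColor cA) (sigmaColor cB) xs ys := by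
  intro j j'
  have hpair := lt_iff_and_eq_iff_of_blockwise (h.1 j) (h.1 j')
    fun i a a' b b' hx hx' hy hy' => by
      have := (h.2 i 2 ![j, j'] ![a, a'] ![b, b'] (Fin.forall_fin_two.2 ⟨hx, hx'⟩)
        (Fin.forall_fin_two.2 ⟨hy, hy'⟩)).atomicAgree 0 1
      exact ⟨this.1, this.2.1⟩
  refine ⟨hpair.1, hpair.2, fun s hs => ?_⟩
  obtain ⟨a, hx⟩ := exists_eq_toLex_mk (xs j) rfl
  obtain ⟨b, hy⟩ := exists_eq_toLex_mk (ys j) (h.1 j).symm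
  rw [hx, hy]
  exact (h.2 _ 1 (fun _ => j) (fun _ => a) (fun _ => b) (fun _ => hx) (fun _ => hy)).atomicAgree
    0 0 |>.2.2 s hs

lemma BlockEquiv.exists_snoc (h : BlockEquiv S cA cB (n + 1) xs ys) (i : I) (α : A i) :
    ∃ β : B i, BlockEquiv S cA cB n (Fin.snoc xs (toLex ⟨i, α⟩)) (Fin.snoc ys (toLex ⟨i, β⟩)) := by
  obtain ⟨m, js, us, vs, hus, hvs, hcover⟩ := exists_block_tuples h.1 i
  obtain ⟨β, hβ⟩ := (h.2 i m js us vs hus hvs).2.1 α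
  refine ⟨β, fun j => ?_, fun i' m' js' us' vs' hus' hvs' => ?_⟩
  · induction j using Fin.lastCases <;> simp [h.1]
  have hcastSucc (l : Fin m') (j : Fin k) (hj : js' l = j.castSucc) :
      xs j = toLex ⟨i', us' l⟩ ∧ ys j = toLex ⟨i', vs' l⟩ := by
    simpa [hj] using And.intro (hus' l) (hvs' l)
  by_cases hi : i' = i
  · subst hi
    refine hβ.of_forall_exists fun l => ?_
    obtain ⟨j, hj⟩ | hj := (js' l).eq_castSucc_or_eq_last
    · obtain ⟨r, hr⟩ := hcover j _ _ (hcastSucc l j hj).1 (hcastSucc l j hj).2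
      exact ⟨r.castSucc, by simpa using hr⟩
    · have hx := hus' l
      have hy := hvs' l
      simp only [hj, Fin.snoc_last, toLex_mk_eq_toLex_mk_iff] at hx hy
      exact ⟨Fin.last m, by simpa using hx, by simpa using hy⟩
  · obtain ⟨m₀, js₀, us₀, vs₀, hus₀, hvs₀, hcover₀⟩ := exists_block_tuples h.1 i'
    refine (h.2 i' m₀ js₀ us₀ vs₀ hus₀ hvs₀).of_succ.of_forall_exists fun l => ?_
    obtain ⟨j, hj⟩ | hj := (js' l).eq_castSucc_or_eq_last
    · exact hcover₀ j _ _ (hcastSucc l j hj).1 (hcastSucc l j hj).2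
    · have hx := hus' l
      rw [hj, Fin.snoc_last] at hx
      exact absurd (congrArg (fun x => (ofLex x).1) hx).symm hi

lemma BlockEquiv.efEquiv (h : BlockEquiv S cA cB n xs ys) :
    EFEquiv S (sigmaColor cA) (sigmaColor cB) n xs ys := by
  induction n generalizing k with
  | zero => exact h.atomicAgree
  | succ n ih =>
      refine ⟨h.atomicAgree, fun a => ?_, fun b => ?_⟩
      · obtain ⟨i, α⟩ := a
        obtain ⟨β, hβ⟩ := h.exists_snoc i α
        exact ⟨_, ih hβ⟩
      · obtain ⟨i, β⟩ := b
        obtain ⟨α, hα⟩ := h.symm.exists_snoc i β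
        exact ⟨_, ih hα.symm⟩

end Sum

end CLO

theorem stmt1_general {ι : Type} {I : Type} [LinearOrder I]
    (A B : I → Type) [∀ i, LinearOrder (A i)] [∀ i, LinearOrder (B i)]
    (cA : ∀ i, ι → Set (A i)) (cB : ∀ i, ι → Set (B i))
    (h : ∀ i, CLOEquiv ι (A i) (cA i) (B i) (cB i)) :
    CLOEquiv ι (Σₗ i, A i) (sigmaColor cA) (Σₗ i, B i) (sigmaColor cB) := by
  classical
  let := CLOStr ι (Σₗ i, A i) (sigmaColor cA)
  let := CLOStr ι (Σₗ i, B i) (sigmaColor cB)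
  refine Language.elementarilyEquivalent_iff.2 fun φ => ?_
  have hgame :=
    (CLO.BlockEquiv.of_cloEquiv (S := CLO.colors φ) (n := CLO.qrank φ) h ![] ![]).efEquiv
  simpa only [CLO.realize_sentence] using hgame.realize_iff φ le_rfl subset_rfl

theorem stmt1 {ι : Type} [Countable ι] {I : Type} [LinearOrder I]
    (A B : I → Type) [∀ i, LinearOrder (A i)] [∀ i, LinearOrder (B i)]
    (cA : ∀ i, ι → Set (A i)) (cB : ∀ i, ι → Set (B i))
    (h : ∀ i, CLOEquiv ι (A i) (cA i) (B i) (cB i)) :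
    CLOEquiv ι (Σₗ i, A i) (sigmaColor cA) (Σₗ i, B i) (sigmaColor cB) :=
  stmt1_general A B cA cB h
end

section
/- Let Φ(x) be a set of L_κ-formulas in one free variable without parameters, let A be a CLO, and suppose the set C = Φ(A) of common realizations of Φ in A is convex. Write A = B₁ + C + B₂, where B₁ (resp. B₂) is the set of elements of A∖C lying below (resp. above) every element of C. If D is an L_κ-structure elementarily equivalent to C, then the sum A_D := B₁ + D + B₂ is elementarily equivalent to A, and the set of common realizations of Φ in A_D is exactly D. -/
open FirstOrder Language Set

/-!
The main tool is the Feferman–Vaught theorem for a lexicographic sum `A ⊕ₗ B` of CLOs: once each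
variable of a formula `φ` is placed in one of the summands, `φ` is equivalent, uniformly in `A` and
`B`, to a finite disjunction `⋁ (ψ ∧ χ)` with `ψ` evaluated in `A` and `χ` in `B`. Hence the type of
a tuple in a sum depends only on the types of its pieces in the summands. Applied to
`A ≅ B₁ ⊕ₗ (C ⊕ₗ B₂)` this gives `B₁ ⊕ₗ (D ⊕ₗ B₂) ≡ A`, and shows that points of `B₁` and `B₂`
realize in `A_D` exactly the formulas they realize in `A`, so they do not realize `Φ`. For `d ∈ D`
and `φ ∈ Φ`, the decomposition turns "`φ` holds at every point of the middle summand" into a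
sentence about the middle summand alone; it holds in `C`, hence in `D`.
-/

section Satisfaction

variable {ι X τ γ : Type} [LinearOrder X] {c : ι → Set X}

def SatBF (X : Type) [LinearOrder X] (c : ι → Set X) {n : ℕ}
    (φ : (CLOLang ι).BoundedFormula τ n) (w : τ ⊕ Fin n → X) : Prop :=
  letI := CLOStr ι X c
  φ.Realize (w ∘ Sum.inl) (w ∘ Sum.inr)

lemma sat_iff_satBF {φ : (CLOLang ι).Formula τ} {v : τ → X} :
    Sat X c φ v ↔ SatBF X c φ (Sum.elim v finZeroElim) := by
  rw [SatBF, Sum.elim_comp_inl, Subsingleton.elim (Sum.elim v finZeroElim ∘ Sum.inr) default]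
  rfl

def snocVar {ε : Type} {n : ℕ} (w : τ ⊕ Fin n → ε) (p : ε) : τ ⊕ Fin (n + 1) → ε :=
  Sum.elim (w ∘ Sum.inl) (Fin.snoc (w ∘ Sum.inr) p)

lemma comp_snocVar {ε ε' : Type} {n : ℕ} (g : ε → ε') (w : τ ⊕ Fin n → ε) (p : ε) :
    g ∘ snocVar w p = snocVar (g ∘ w) (g p) := by
  ext (x | k)
  · rfl
  · exact congrFun (Fin.comp_snoc g _ p) k

lemma satBF_all {n : ℕ} {φ : (CLOLang ι).BoundedFormula τ (n + 1)} {w : τ ⊕ Fin n → X} :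
    SatBF X c φ.all w ↔ ∀ x, SatBF X c φ (snocVar w x) :=
  letI := CLOStr ι X c
  BoundedFormula.realize_all

lemma satBF_imp {n : ℕ} {φ ψ : (CLOLang ι).BoundedFormula τ n} {w : τ ⊕ Fin n → X} :
    SatBF X c (φ.imp ψ) w ↔ (SatBF X c φ w → SatBF X c ψ w) :=
  letI := CLOStr ι X c
  BoundedFormula.realize_imp

@[simp]
lemma sat_top {v : γ → X} : Sat X c ⊤ v :=
  letI := CLOStr ι X c
  Formula.realize_top.2 trivial

@[simp]
lemma sat_inf {φ ψ : (CLOLang ι).Formula γ} {v : γ → X} :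
    Sat X c (φ ⊓ ψ) v ↔ Sat X c φ v ∧ Sat X c ψ v :=
  letI := CLOStr ι X c
  Formula.realize_inf

@[simp]
lemma sat_not {φ : (CLOLang ι).Formula γ} {v : γ → X} : Sat X c φ.not v ↔ ¬ Sat X c φ v :=
  letI := CLOStr ι X c
  Formula.realize_not

lemma sat_iExs_unit {φ : (CLOLang ι).Formula (γ ⊕ Unit)} {v : γ → X} :
    Sat X c (φ.iExs Unit) v ↔ ∃ x, Sat X c φ (Sum.elim v fun _ => x) :=
  letI := CLOStr ι X c
  Formula.realize_iExs.trans ⟨fun ⟨i, h⟩ => ⟨i (), h⟩, fun ⟨_, h⟩ => ⟨_, h⟩⟩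

lemma sat_foldr_sup {l : List ((CLOLang ι).Formula γ)} {v : γ → X} :
    Sat X c (l.foldr (· ⊔ ·) ⊥) v ↔ ∃ φ ∈ l, Sat X c φ v :=
  letI := CLOStr ι X c
  BoundedFormula.realize_foldr_sup l v default

lemma sat_iAlls_relabel_inr {ψ : (CLOLang ι).Formula Unit} {v : Empty → X} :
    Sat X c ((ψ.relabel Sum.inr).iAlls Unit) v ↔ ∀ x, Sat X c ψ fun _ => x :=
  letI := CLOStr ι X c
  Formula.realize_iAlls.trans
    ⟨fun h x => Formula.realize_relabel.1 (h fun _ => x),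
      fun h i => Formula.realize_relabel.2 (h (i ()))⟩

def ltF (x y : γ) : (CLOLang ι).Formula γ :=
  Relations.formula₂ (L := CLOLang ι) CLORel.lt (Term.var x) (Term.var y)

def colorF (k : ι) (x : γ) : (CLOLang ι).Formula γ :=
  Relations.formula₁ (L := CLOLang ι) (CLORel.color k) (Term.var x)

@[simp]
lemma sat_ltF {x y : γ} {v : γ → X} : Sat X c (ltF x y) v ↔ v x < v y :=
  Iff.rfl

@[simp]
lemma sat_colorF {k : ι} {x : γ} {v : γ → X} : Sat X c (colorF k x) v ↔ v x ∈ c k :=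
  Iff.rfl

@[simp]
lemma sat_equal_var {x y : γ} {v : γ → X} :
    Sat X c ((Term.var x).equal (Term.var y)) v ↔ v x = v y :=
  Iff.rfl

end Satisfaction

section Split

/-- A list of pairs `(ψ, χ)`, standing for the formula `⋁ (ψ ∧ χ)` on a lexicographic sum, with `ψ`
read in the left summand and `χ` in the right one. -/
abbrev SplitFormula (ι γ δ : Type) : Type :=
  List ((CLOLang ι).Formula γ × (CLOLang ι).Formula δ)

variable {ι α β γ δ : Type} [LinearOrder α] [LinearOrder β] {ca : ι → Set α} {cb : ι → Set β}

def SatSplit (ca : ι → Set α) (cb : ι → Set β)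
    (l : SplitFormula ι γ δ) (va : γ → α) (vb : δ → β) :
    Prop :=
  ∃ p ∈ l, Sat α ca p.1 va ∧ Sat β cb p.2 vb

@[simp]
lemma satSplit_nil {va : γ → α} {vb : δ → β} :
    ¬ SatSplit ca cb ([] : SplitFormula ι γ δ) va vb := by
  simp [SatSplit]

@[simp]
lemma satSplit_cons {p : (CLOLang ι).Formula γ × (CLOLang ι).Formula δ} {l} {va : γ → α}
    {vb : δ → β} :
    SatSplit ca cb (p :: l) va vb ↔
      (Sat α ca p.1 va ∧ Sat β cb p.2 vb) ∨ SatSplit ca cb l va vb := by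
  simp [SatSplit]

@[simp]
lemma satSplit_append {l₁ l₂ : SplitFormula ι γ δ}
    {va : γ → α} {vb : δ → β} :
    SatSplit ca cb (l₁ ++ l₂) va vb ↔ SatSplit ca cb l₁ va vb ∨ SatSplit ca cb l₂ va vb := by
  simp only [SatSplit, List.mem_append, or_and_right, exists_or]

def splitAnd (l₁ l₂ : SplitFormula ι γ δ) :
    SplitFormula ι γ δ :=
  l₁.flatMap fun p => l₂.map fun q => (p.1 ⊓ q.1, p.2 ⊓ q.2)

@[simp]
lemma satSplit_splitAnd {l₁ l₂ : SplitFormula ι γ δ}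
    {va : γ → α} {vb : δ → β} :
    SatSplit ca cb (splitAnd l₁ l₂) va vb ↔ SatSplit ca cb l₁ va vb ∧ SatSplit ca cb l₂ va vb := by
  simp only [SatSplit, splitAnd, List.mem_flatMap, List.mem_map]
  aesop

-- `¬ ⋁ᵢ (ψᵢ ∧ χᵢ)` is `⋀ᵢ (¬ ψᵢ ∨ ¬ χᵢ)`, distributed back into disjunctive form.
def splitNot : SplitFormula ι γ δ →
    SplitFormula ι γ δ
  | [] => [(⊤, ⊤)]
  | p :: l => splitAnd [(p.1.not, ⊤), (⊤, p.2.not)] (splitNot l)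

@[simp]
lemma satSplit_splitNot {l : SplitFormula ι γ δ}
    {va : γ → α} {vb : δ → β} :
    SatSplit ca cb (splitNot l) va vb ↔ ¬ SatSplit ca cb l va vb := by
  induction l with
  | nil => simp [splitNot]
  | cons p l ih =>
    simp only [splitNot, satSplit_splitAnd, satSplit_cons, satSplit_nil, ih, sat_not, sat_top]
    tauto

noncomputable def splitExLeft (l : SplitFormula ι (γ ⊕ Unit) δ) :
    SplitFormula ι γ δ :=
  l.map fun p => (p.1.iExs Unit, p.2)

noncomputable def splitExRight
    (l : SplitFormula ι γ (δ ⊕ Unit)) :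
    SplitFormula ι γ δ :=
  l.map fun p => (p.1, p.2.iExs Unit)

@[simp]
lemma satSplit_splitExLeft {l : SplitFormula ι (γ ⊕ Unit) δ}
    {va : γ → α} {vb : δ → β} :
    SatSplit ca cb (splitExLeft l) va vb ↔
      ∃ a : α, SatSplit ca cb l (Sum.elim va fun _ => a) vb := by
  simp only [SatSplit, splitExLeft, List.mem_map]
  constructor
  · rintro ⟨_, ⟨p, hp, rfl⟩, hψ, hχ⟩
    obtain ⟨a, ha⟩ := sat_iExs_unit.1 hψ
    exact ⟨a, p, hp, ha, hχ⟩
  · rintro ⟨a, p, hp, hψ, hχ⟩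
    exact ⟨_, ⟨p, hp, rfl⟩, sat_iExs_unit.2 ⟨a, hψ⟩, hχ⟩

@[simp]
lemma satSplit_splitExRight {l : SplitFormula ι γ (δ ⊕ Unit)}
    {va : γ → α} {vb : δ → β} :
    SatSplit ca cb (splitExRight l) va vb ↔
      ∃ b : β, SatSplit ca cb l va (Sum.elim vb fun _ => b) := by
  simp only [SatSplit, splitExRight, List.mem_map]
  constructor
  · rintro ⟨_, ⟨p, hp, rfl⟩, hψ, hχ⟩
    obtain ⟨b, hb⟩ := sat_iExs_unit.1 hχ
    exact ⟨b, p, hp, hψ, hb⟩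
  · rintro ⟨b, p, hp, hψ, hχ⟩
    exact ⟨_, ⟨p, hp, rfl⟩, hψ, sat_iExs_unit.2 ⟨b, hχ⟩⟩

end Split

section Assignments

variable {α β γ δ τ : Type}

lemma sumMap_comp_snocVar_inl {n : ℕ} (f : τ ⊕ Fin n → γ ⊕ δ) (va : γ → α) (vb : δ → β) (a : α) :
    toLex ∘ Sum.map (Sum.elim va fun _ => a) vb ∘
        snocVar (Sum.map Sum.inl id ∘ f) (.inl (.inr ())) =
      snocVar (toLex ∘ Sum.map va vb ∘ f) (toLex (.inl a)) := by
  rw [comp_snocVar, comp_snocVar, ← Function.comp_assoc (Sum.map _ _), Sum.map_comp_map]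
  rfl

lemma sumMap_comp_snocVar_inr {n : ℕ} (f : τ ⊕ Fin n → γ ⊕ δ) (va : γ → α) (vb : δ → β) (b : β) :
    toLex ∘ Sum.map va (Sum.elim vb fun _ => b) ∘
        snocVar (Sum.map id Sum.inl ∘ f) (.inr (.inr ())) =
      snocVar (toLex ∘ Sum.map va vb ∘ f) (toLex (.inr b)) := by
  rw [comp_snocVar, comp_snocVar, ← Function.comp_assoc (Sum.map _ _), Sum.map_comp_map]
  rfl

end Assignments

section FefermanVaught

variable {ι α β γ δ τ : Type} [LinearOrder α] [LinearOrder β] {ca : ι → Set α} {cb : ι → Set β}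

def termVar {X : Type} : (CLOLang ι).Term X → X
  | .var x => x
  | .func f _ => Empty.elim f

lemma realize_eq_termVar {X M : Type} [(CLOLang ι).Structure M] (t : (CLOLang ι).Term X)
    (v : X → M) : t.realize v = v (termVar t) := by
  cases t with
  | var => rfl
  | func f _ => exact Empty.elim f

def splitLt : γ ⊕ δ → γ ⊕ δ → SplitFormula ι γ δ
  | .inl x, .inl y => [(ltF x y, ⊤)]
  | .inl _, .inr _ => [(⊤, ⊤)]
  | .inr _, .inl _ => []
  | .inr x, .inr y => [(⊤, ltF x y)]

def splitEq : γ ⊕ δ → γ ⊕ δ → SplitFormula ι γ δ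
  | .inl x, .inl y => [((Term.var x).equal (Term.var y), ⊤)]
  | .inr x, .inr y => [(⊤, (Term.var x).equal (Term.var y))]
  | _, _ => []

def splitColor (k : ι) : γ ⊕ δ → SplitFormula ι γ δ
  | .inl x => [(colorF k x, ⊤)]
  | .inr x => [(⊤, colorF k x)]

def splitRel : ∀ {k : ℕ}, (CLOLang ι).Relations k → (Fin k → γ ⊕ δ) →
    SplitFormula ι γ δ
  | _, .lt, z => splitLt (z 0) (z 1)
  | _, .color k, z => splitColor k (z 0)

lemma satSplit_splitLt (p q : γ ⊕ δ) {va : γ → α} {vb : δ → β} :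
    SatSplit ca cb (splitLt p q) va vb ↔ toLex (Sum.map va vb p) < toLex (Sum.map va vb q) := by
  rcases p with x | x <;> rcases q with y | y <;> simp [splitLt]

lemma satSplit_splitEq (p q : γ ⊕ δ) {va : γ → α} {vb : δ → β} :
    SatSplit ca cb (splitEq p q) va vb ↔ toLex (Sum.map va vb p) = toLex (Sum.map va vb q) := by
  rcases p with x | x <;> rcases q with y | y <;> simp [splitEq]

lemma satSplit_splitRel {k : ℕ} (R : (CLOLang ι).Relations k) (z : Fin k → γ ⊕ δ) {va : γ → α}
    {vb : δ → β} :
    SatSplit ca cb (splitRel R z) va vb ↔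
      cloRelMap (sumColor2 ca cb) R (toLex ∘ Sum.map va vb ∘ z) := by
  cases R with
  | lt => exact satSplit_splitLt _ _
  | color k =>
    simp only [splitRel, cloRelMap, Function.comp_apply]
    rcases z 0 with x | x <;> simp [splitColor, sumColor2]

/-- The Feferman–Vaught decomposition of `φ`, where `f` places each free and bound variable of `φ`
in one of the two summands. -/
noncomputable def fvSplit : ∀ {n : ℕ}, (CLOLang ι).BoundedFormula τ n → ∀ {γ δ : Type},
    (τ ⊕ Fin n → γ ⊕ δ) → SplitFormula ι γ δ
  | _, .falsum, _, _, _ => []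
  | _, .equal t₁ t₂, _, _, f => splitEq (f (termVar t₁)) (f (termVar t₂))
  | _, .rel R ts, _, _, f => splitRel R fun i => f (termVar (ts i))
  | _, .imp φ ψ, _, _, f => splitNot (fvSplit φ f) ++ fvSplit ψ f
  | _, .all φ, _, _, f =>
    -- `∀ x, φ` holds iff neither summand contains an `x` with `¬ φ`.
    splitNot
      (splitExLeft (splitNot (fvSplit φ (snocVar (Sum.map Sum.inl id ∘ f) (.inl (.inr ()))))) ++
        splitExRight (splitNot (fvSplit φ (snocVar (Sum.map id Sum.inl ∘ f) (.inr (.inr ()))))))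

theorem satSplit_fvSplit {n : ℕ} (φ : (CLOLang ι).BoundedFormula τ n) {γ δ : Type}
    (f : τ ⊕ Fin n → γ ⊕ δ) (va : γ → α) (vb : δ → β) :
    SatSplit ca cb (fvSplit φ f) va vb ↔
      SatBF (α ⊕ₗ β) (sumColor2 ca cb) φ (toLex ∘ Sum.map va vb ∘ f) := by
  induction φ generalizing γ δ with
  | falsum => simp [fvSplit, SatBF, BoundedFormula.Realize]
  | equal t₁ t₂ =>
    rw [fvSplit, satSplit_splitEq]
    simp [SatBF, BoundedFormula.Realize, realize_eq_termVar]
  | rel R ts =>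
    rw [fvSplit, satSplit_splitRel]
    simp only [SatBF, BoundedFormula.Realize, realize_eq_termVar, Sum.elim_comp_inl_inr]
    rfl
  | imp φ ψ ih₁ ih₂ =>
    rw [fvSplit, satSplit_append, satSplit_splitNot, ih₁, ih₂, satBF_imp, imp_iff_not_or]
  | all φ ih =>
    simp only [fvSplit, satSplit_splitNot, satSplit_append, satSplit_splitExLeft,
      satSplit_splitExRight, ih, not_or, not_exists, not_not, sumMap_comp_snocVar_inl,
      sumMap_comp_snocVar_inr, satBF_all]
    refine ⟨fun ⟨hl, hr⟩ x => ?_, fun h => ⟨fun _ => h _, fun _ => h _⟩⟩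
    rcases x with a | b
    exacts [hl a, hr b]

theorem sat_sumLex_iff_satSplit {ε : Type} (φ : (CLOLang ι).Formula ε) (f : ε → γ ⊕ δ)
    (va : γ → α) (vb : δ → β) :
    Sat (α ⊕ₗ β) (sumColor2 ca cb) φ (toLex ∘ Sum.map va vb ∘ f) ↔
      SatSplit ca cb (fvSplit φ (Sum.elim f finZeroElim)) va vb := by
  rw [satSplit_fvSplit, sat_iff_satBF]
  congr! 1
  ext (x | k)
  · rfl
  · exact k.elim0

end FefermanVaught

section Types

variable {ι : Type}

def SameType {X Y γ : Type} [LinearOrder X] [LinearOrder Y] (cX : ι → Set X) (cY : ι → Set Y)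
    (vx : γ → X) (vy : γ → Y) : Prop :=
  ∀ φ : (CLOLang ι).Formula γ, Sat X cX φ vx ↔ Sat Y cY φ vy

variable {X Y α β α' β' γ δ ε : Type} [LinearOrder X] [LinearOrder Y] {cX : ι → Set X}
  {cY : ι → Set Y}

lemma SameType.refl (c : ι → Set X) (v : γ → X) : SameType c c v v :=
  fun _ => Iff.rfl

lemma SameType.symm {vx : γ → X} {vy : γ → Y} (h : SameType cX cY vx vy) :
    SameType cY cX vy vx :=
  fun φ => (h φ).symm

lemma SameType.trans {Z : Type} [LinearOrder Z] {cZ : ι → Set Z} {vx : γ → X} {vy : γ → Y}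
    {vz : γ → Z} (h₁ : SameType cX cY vx vy) (h₂ : SameType cY cZ vy vz) :
    SameType cX cZ vx vz :=
  fun φ => (h₁ φ).trans (h₂ φ)

lemma cloEquiv_iff_sameType {vx : Empty → X} {vy : Empty → Y} :
    CLOEquiv ι X cX Y cY ↔ SameType cX cY vx vy := by
  let := CLOStr ι X cX
  let := CLOStr ι Y cY
  rw [CLOEquiv, elementarilyEquivalent_iff, Subsingleton.elim vx default,
    Subsingleton.elim vy default]
  rfl

lemma SameType.mem_typeSet_iff {x : X} {y : Y} (h : SameType cX cY (fun _ : Unit => x) fun _ => y)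
    (Φ : Set ((CLOLang ι).Formula Unit)) :
    x ∈ TypeSet ι X cX Φ ↔ y ∈ TypeSet ι Y cY Φ :=
  forall₂_congr fun φ _ => h φ

variable [LinearOrder α] [LinearOrder β] [LinearOrder α'] [LinearOrder β']
  {ca : ι → Set α} {cb : ι → Set β} {ca' : ι → Set α'} {cb' : ι → Set β'}

theorem SameType.sumLex {va : γ → α} {vb : δ → β} {va' : γ → α'} {vb' : δ → β'}
    (ha : SameType ca ca' va va') (hb : SameType cb cb' vb vb') (f : ε → γ ⊕ δ) :
    SameType (sumColor2 ca cb) (sumColor2 ca' cb') (toLex ∘ Sum.map va vb ∘ f)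
      (toLex ∘ Sum.map va' vb' ∘ f) := by
  intro φ
  simp only [sat_sumLex_iff_satSplit, SatSplit, ha _, hb _]

lemma SameType.forall_sat_iff {vx : Empty → X} {vy : Empty → Y} (h : SameType cX cY vx vy)
    (ψ : (CLOLang ι).Formula Unit) :
    (∀ x, Sat X cX ψ fun _ => x) ↔ ∀ y, Sat Y cY ψ fun _ => y := by
  rw [← sat_iAlls_relabel_inr (v := vx), ← sat_iAlls_relabel_inr (v := vy)]
  exact h _

lemma exists_formula_sat_iff_exists_mem {A : Type} (l : List A) (P : A → Prop)
    (g : A → (CLOLang ι).Formula ε) :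
    ∃ ψ : (CLOLang ι).Formula ε, ∀ (X : Type) [LinearOrder X] (c : ι → Set X) (v : ε → X),
      Sat X c ψ v ↔ ∃ p ∈ l, P p ∧ Sat X c (g p) v := by
  classical
  refine ⟨((l.filter fun p => P p).map g).foldr (· ⊔ ·) ⊥, fun X _ c v => ?_⟩
  simp [sat_foldr_sup, and_assoc]

theorem exists_formula_sat_sumLex_inr {W : Type} [LinearOrder W] (cW : ι → Set W)
    (φ : (CLOLang ι).Formula ε) :
    ∃ ψ : (CLOLang ι).Formula ε, ∀ (X : Type) [LinearOrder X] (cX : ι → Set X) (v : ε → X),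
      Sat (W ⊕ₗ X) (sumColor2 cW cX) φ (toLex ∘ Sum.inr ∘ v) ↔ Sat X cX ψ v := by
  obtain ⟨ψ, hψ⟩ := exists_formula_sat_iff_exists_mem
    (fvSplit φ (Sum.elim (Sum.inr : ε → Empty ⊕ ε) finZeroElim))
    (fun p => Sat W cW p.1 default) Prod.snd
  exact ⟨ψ, fun X _ cX v => (sat_sumLex_iff_satSplit φ Sum.inr default v).trans (hψ X cX v).symm⟩

theorem exists_formula_sat_sumLex_inl {Z : Type} [LinearOrder Z] (cZ : ι → Set Z)
    (φ : (CLOLang ι).Formula ε) :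
    ∃ ψ : (CLOLang ι).Formula ε, ∀ (X : Type) [LinearOrder X] (cX : ι → Set X) (v : ε → X),
      Sat (X ⊕ₗ Z) (sumColor2 cX cZ) φ (toLex ∘ Sum.inl ∘ v) ↔ Sat X cX ψ v := by
  obtain ⟨ψ, hψ⟩ := exists_formula_sat_iff_exists_mem
    (fvSplit φ (Sum.elim (Sum.inl : ε → ε ⊕ Empty) finZeroElim))
    (fun p => Sat Z cZ p.2 default) Prod.fst
  refine ⟨ψ, fun X _ cX v => (sat_sumLex_iff_satSplit φ Sum.inl v (default : Empty → Z)).trans ?_⟩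
  simp only [hψ, SatSplit, and_comm]

theorem SameType.forall_sat_middle_iff {W Z : Type} [LinearOrder W] [LinearOrder Z]
    {cW : ι → Set W} {cZ : ι → Set Z} {vx : Empty → X} {vy : Empty → Y}
    (h : SameType cX cY vx vy) (φ : (CLOLang ι).Formula Unit) :
    (∀ x : X, Sat (W ⊕ₗ (X ⊕ₗ Z)) (sumColor2 cW (sumColor2 cX cZ)) φ
        fun _ => toLex (.inr (toLex (.inl x)))) ↔
      ∀ y : Y, Sat (W ⊕ₗ (Y ⊕ₗ Z)) (sumColor2 cW (sumColor2 cY cZ)) φ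
        fun _ => toLex (.inr (toLex (.inl y))) := by
  obtain ⟨ψ₁, hψ₁⟩ := exists_formula_sat_sumLex_inr cW φ
  obtain ⟨ψ₂, hψ₂⟩ := exists_formula_sat_sumLex_inl cZ ψ₁
  have key : ∀ (X : Type) [LinearOrder X] (cX : ι → Set X) (x : X),
      Sat (W ⊕ₗ (X ⊕ₗ Z)) (sumColor2 cW (sumColor2 cX cZ)) φ
        (fun _ => toLex (.inr (toLex (.inl x)))) ↔ Sat X cX ψ₂ fun _ => x :=
    fun X _ cX x =>
      (hψ₁ (X ⊕ₗ Z) (sumColor2 cX cZ) fun _ => toLex (.inl x)).trans (hψ₂ X cX fun _ => x)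
  simp only [key]
  exact h.forall_sat_iff ψ₂

end Types

section Isomorphism

variable {ι X Y α β γ : Type} {cX : ι → Set X} {cY : ι → Set Y} {ca : ι → Set α}
  {cb : ι → Set β}

def PreservesColors (cX : ι → Set X) (cY : ι → Set Y) (e : X → Y) : Prop :=
  ∀ k x, e x ∈ cY k ↔ x ∈ cX k

lemma preservesColors_val (s : Set X) : PreservesColors (subColor cX s) cX Subtype.val :=
  fun _ _ => Iff.rfl

lemma PreservesColors.sumLexElim {f : α → X} {g : β → X} (hf : PreservesColors ca cX f)
    (hg : PreservesColors cb cX g) :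
    PreservesColors (sumColor2 ca cb) cX (Sum.elim f g ∘ ofLex) := by
  rintro k (a | b)
  exacts [hf k a, hg k b]

variable [LinearOrder X] [LinearOrder Y] [LinearOrder α] [LinearOrder β]

lemma StrictMono.sumLexElim {f : α → X} {g : β → X} (hf : StrictMono f) (hg : StrictMono g)
    (hfg : ∀ a b, f a < g b) : StrictMono (Sum.elim f g ∘ ofLex) := by
  rintro (a | b) (a' | b') h
  · exact hf (Sum.Lex.inl_lt_inl_iff.1 h)
  · exact hfg a b'
  · exact absurd h Sum.Lex.not_inr_lt_inl
  · exact hg (Sum.Lex.inr_lt_inr_iff.1 h)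

theorem sameType_comp_of_strictMono {e : X → Y} (he : StrictMono e)
    (he' : Function.Surjective e) (hc : PreservesColors cX cY e) (v : γ → X) :
    SameType cX cY v (e ∘ v) := by
  intro φ
  let := CLOStr ι X cX
  let := CLOStr ι Y cY
  let g : X ≃[CLOLang ι] Y :=
    { toEquiv := Equiv.ofBijective e ⟨he.injective, he'⟩
      map_fun' := fun f => Empty.elim f
      map_rel' := fun r x => by
        cases r
        exacts [he.lt_iff_lt, hc _ _] }
  exact (StrongHomClass.realize_formula g φ).symm

end Isomorphism

theorem sameType_sumLex_of_cover {ι M γ : Type} [LinearOrder M] {cM : ι → Set M}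
    {B₁ C B₂ : Set M} (hcover : ∀ x : M, x ∈ B₁ ∨ x ∈ C ∨ x ∈ B₂)
    (h1C : ∀ x ∈ B₁, ∀ y ∈ C, x < y) (hC2 : ∀ y ∈ C, ∀ z ∈ B₂, y < z)
    (h12 : ∀ x ∈ B₁, ∀ z ∈ B₂, x < z) (v : γ → ↥B₁ ⊕ₗ (↥C ⊕ₗ ↥B₂)) :
    SameType (sumColor2 (subColor cM B₁) (sumColor2 (subColor cM C) (subColor cM B₂))) cM v
      (Sum.elim Subtype.val (Sum.elim Subtype.val Subtype.val ∘ ofLex) ∘ ofLex ∘ v) := by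
  refine sameType_comp_of_strictMono ?_ ?_
    ((preservesColors_val B₁).sumLexElim
      ((preservesColors_val C).sumLexElim (preservesColors_val B₂))) v
  · refine (Subtype.strictMono_coe _).sumLexElim ((Subtype.strictMono_coe _).sumLexElim
      (Subtype.strictMono_coe _) fun c b => hC2 _ c.2 _ b.2) fun a => ?_
    rintro (c | b)
    exacts [h1C _ a.2 _ c.2, h12 _ a.2 _ b.2]
  · intro x
    rcases hcover x with hx | hx | hx
    exacts [⟨toLex (.inl ⟨x, hx⟩), rfl⟩, ⟨toLex (.inr (toLex (.inl ⟨x, hx⟩))), rfl⟩,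
      ⟨toLex (.inr (toLex (.inr ⟨x, hx⟩))), rfl⟩]

theorem stmt2_general {ι : Type} {M D : Type} [LinearOrder M] [LinearOrder D]
    (cM : ι → Set M) (cD : ι → Set D)
    (Φ : Set ((CLOLang ι).Formula Unit)) (B₁ B₂ : Set M)
    (hcover : ∀ x : M, x ∈ B₁ ∨ x ∈ TypeSet ι M cM Φ ∨ x ∈ B₂)
    (h1C : ∀ x ∈ B₁, ∀ y ∈ TypeSet ι M cM Φ, x < y)
    (hC2 : ∀ y ∈ TypeSet ι M cM Φ, ∀ z ∈ B₂, y < z)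
    (h12 : ∀ x ∈ B₁, ∀ z ∈ B₂, x < z)
    (hD : CLOEquiv ι D cD (↥(TypeSet ι M cM Φ)) (subColor cM (TypeSet ι M cM Φ))) :
    CLOEquiv ι (↥B₁ ⊕ₗ (D ⊕ₗ ↥B₂))
        (sumColor2 (subColor cM B₁) (sumColor2 cD (subColor cM B₂))) M cM ∧
      ∀ x : ↥B₁ ⊕ₗ (D ⊕ₗ ↥B₂),
        x ∈ TypeSet ι (↥B₁ ⊕ₗ (D ⊕ₗ ↥B₂))
            (sumColor2 (subColor cM B₁) (sumColor2 cD (subColor cM B₂))) Φ ↔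
          ∃ d : D, x = toLex (Sum.inr (toLex (Sum.inl d))) := by
  set C := TypeSet ι M cM Φ
  have hM (γ : Type) (v : γ → ↥B₁ ⊕ₗ (↥C ⊕ₗ ↥B₂)) :=
    sameType_sumLex_of_cover (cM := cM) hcover h1C hC2 h12 v
  have hCD : SameType (subColor cM C) cD (default : Empty → C) default :=
    (cloEquiv_iff_sameType.1 hD).symm
  have hCB₂ := hCD.sumLex (.refl (subColor cM B₂) (default : Empty → B₂)) Empty.elim
  have hB₁CB₂ := (SameType.refl (subColor cM B₁) (default : Empty → B₁)).sumLex hCB₂ Empty.elim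
  refine ⟨cloEquiv_iff_sameType.2 (hB₁CB₂.symm.trans (hM _ _)), fun x => ⟨fun hx => ?_, ?_⟩⟩
  · rcases x with a | (d | b)
    · have hsum :=
        ((SameType.refl (subColor cM B₁) fun _ => a).sumLex hCB₂ fun _ => .inl ()).mem_typeSet_iff Φ
      have ha : (a : M) ∈ C := ((hM _ _).mem_typeSet_iff Φ).1 (hsum.2 hx)
      exact absurd (h1C _ a.2 _ ha) (lt_irrefl _)
    · exact ⟨d, rfl⟩
    · have hsum := ((SameType.refl (subColor cM B₁) (default : Empty → B₁)).sumLex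
        (hCD.sumLex (.refl (subColor cM B₂) fun _ => b) fun _ => .inr ())
        fun _ => .inr ()).mem_typeSet_iff Φ
      have hb : (b : M) ∈ C := ((hM _ _).mem_typeSet_iff Φ).1 (hsum.2 hx)
      exact absurd (hC2 _ hb _ b.2) (lt_irrefl _)
  · rintro ⟨d, rfl⟩ φ hφ
    exact (hCD.forall_sat_middle_iff φ).1 (fun c => (hM _ _ φ).2 (c.2 φ hφ)) d

theorem stmt2 {ι : Type} [Countable ι] {M D : Type} [LinearOrder M] [LinearOrder D]
    (cM : ι → Set M) (cD : ι → Set D)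
    (Φ : Set ((CLOLang ι).Formula Unit)) (B₁ B₂ : Set M)
    (hconv : (TypeSet ι M cM Φ).OrdConnected)
    (hcover : ∀ x : M, x ∈ B₁ ∨ x ∈ TypeSet ι M cM Φ ∨ x ∈ B₂)
    (h1C : ∀ x ∈ B₁, ∀ y ∈ TypeSet ι M cM Φ, x < y)
    (hC2 : ∀ y ∈ TypeSet ι M cM Φ, ∀ z ∈ B₂, y < z)
    (h12 : ∀ x ∈ B₁, ∀ z ∈ B₂, x < z)
    (hD : CLOEquiv ι D cD (↥(TypeSet ι M cM Φ)) (subColor cM (TypeSet ι M cM Φ))) :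
    CLOEquiv ι (↥B₁ ⊕ₗ (D ⊕ₗ ↥B₂))
        (sumColor2 (subColor cM B₁) (sumColor2 cD (subColor cM B₂))) M cM ∧
      ∀ x : ↥B₁ ⊕ₗ (D ⊕ₗ ↥B₂),
        x ∈ TypeSet ι (↥B₁ ⊕ₗ (D ⊕ₗ ↥B₂))
            (sumColor2 (subColor cM B₁) (sumColor2 cD (subColor cM B₂))) Φ ↔
          ∃ d : D, x = toLex (Sum.inr (toLex (Sum.inl d))) :=
  stmt2_general cM cD Φ B₁ B₂ hcover h1C hC2 h12 hD
end
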